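/- arXiv:math/9808050 — 2 statements merged into one kernel-verified Lean document; each statement's English description precedes it below -/
import Mathlib

section
/- Let n ≥ 1, 1 ≤ k ≤ n, and let C = y_1+⋯+y_m be an auxiliary alphabet of independent variables (hence symmetric in x_1,…,x_n). Then for every j ≥ 0, in ℚ(t)[y_1,…,y_m, x_1,…,x_n] one has χ^{(k)}_{(1|n−k)} S_j[C + X_k^t] = c(k)·S_j[C + X_{k−1}^t] + S_j[C + X^t], where c(k) = t^{−1} + t^{−2} + ⋯ + t^{−(n−k)} (an empty sum 0 when k = n). -/
open MvPolynomial Finset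

set_option synthInstance.maxHeartbeats 1000000
set_option maxHeartbeats 1000000

noncomputable section

/-- The base field `ℚ(q,t)`. -/
abbrev Fqt : Type := FractionRing (MvPolynomial (Fin 2) ℚ)

/-- The element `q` of `ℚ(q,t)`. -/
def qF : Fqt := algebraMap (MvPolynomial (Fin 2) ℚ) Fqt (X 0)

/-- The element `t` of `ℚ(q,t)`. -/
def tF : Fqt := algebraMap (MvPolynomial (Fin 2) ℚ) Fqt (X 1)

lemma qF_ne_zero : qF ≠ 0 := by
  have h : Function.Injective (algebraMap (MvPolynomial (Fin 2) ℚ) Fqt) :=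
    IsFractionRing.injective _ _
  intro hq
  exact MvPolynomial.X_ne_zero (R := ℚ) (0 : Fin 2) (h (by rw [map_zero]; exact hq))

/-- Polynomials in `N` variables `x_1, …, x_N` over `ℚ(q,t)`. -/
abbrev Rg (N : ℕ) := MvPolynomial (Fin N) Fqt

/-- The field of rational functions in `x_1, …, x_N` over `ℚ(q,t)`. -/
abbrev Kg (N : ℕ) := FractionRing (Rg N)

/-- The variable `x_i` (1-based indexing), as an element of `Kg N`. -/
def xv (N i : ℕ) : Kg N :=
  if h : 1 ≤ i ∧ i ≤ N then algebraMap (Rg N) (Kg N) (X ⟨i - 1, by omega⟩) else 0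

/-- A scalar from `ℚ(q,t)` viewed inside `Kg N`. -/
def cK (N : ℕ) (c : Fqt) : Kg N := algebraMap (Rg N) (Kg N) (C c)

/-- The element `q` of `Kg N`. -/
def qK (N : ℕ) : Kg N := cK N qF

/-- The element `t` of `Kg N`. -/
def tK (N : ℕ) : Kg N := cK N tF

/-- The field automorphism of `Kg N` exchanging two variables. -/
def swapK (N : ℕ) (a b : Fin N) : Kg N ≃+* Kg N :=
  IsFractionRing.ringEquivOfRingEquiv
    (AlgEquiv.toRingEquiv (renameEquiv Fqt (Equiv.swap a b)))

/-- `swapv N a b` exchanges the variables `x_a` and `x_b` (1-based). -/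
def swapv (N a b : ℕ) (f : Kg N) : Kg N :=
  if h : 1 ≤ a ∧ a ≤ N ∧ 1 ≤ b ∧ b ≤ N then
    swapK N ⟨a - 1, by omega⟩ ⟨b - 1, by omega⟩ f else f

/-- The divided difference `∂_i` (1-based): `∂_i f = (f - σ_i f)/(x_i - x_{i+1})`. -/
def dd (N i : ℕ) (f : Kg N) : Kg N :=
  if 1 ≤ i ∧ i + 1 ≤ N then (f - swapv N i (i + 1) f) / (xv N i - xv N (i + 1)) else 0

/-- The algebra endomorphism of `Rg N` scaling the variable `l` by the scalar `c`. -/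
def scaleHom (N : ℕ) (l : Fin N) (c : Fqt) : Rg N →ₐ[Fqt] Rg N :=
  aeval (fun i => if i = l then C c * X i else X i)

lemma scaleHom_comp (N : ℕ) (l : Fin N) (c : Fqt) (hc : c ≠ 0) :
    (scaleHom N l c).comp (scaleHom N l c⁻¹) = AlgHom.id Fqt (Rg N) := by
  apply algHom_ext
  intro i
  by_cases h : i = l
  · subst h
    simp only [scaleHom, AlgHom.coe_comp, Function.comp_apply, aeval_X, if_pos,
      AlgHom.coe_id, id_eq, map_mul, aeval_C, algebraMap_eq, if_true]
    rw [← mul_assoc, ← C_mul, inv_mul_cancel₀ hc, C_1, one_mul]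
  · simp [scaleHom, h]

/-- The algebra automorphism of `Rg N` scaling the variable `l` by a nonzero scalar `c`. -/
def scaleEquiv (N : ℕ) (l : Fin N) (c : Fqt) (hc : c ≠ 0) : Rg N ≃ₐ[Fqt] Rg N :=
  AlgEquiv.ofAlgHom (scaleHom N l c) (scaleHom N l c⁻¹)
    (scaleHom_comp N l c hc)
    (by simpa [inv_inv] using scaleHom_comp N l c⁻¹ (inv_ne_zero hc))

/-- The field automorphism `Θ_l` of `Kg N`, substituting `x_l ↦ q·x_l`. -/
def thetaK (N : ℕ) (l : Fin N) : Kg N ≃+* Kg N :=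
  IsFractionRing.ringEquivOfRingEquiv
    (AlgEquiv.toRingEquiv (scaleEquiv N l qF qF_ne_zero))

/-- `Θ_l` with 1-based indexing: substitutes `x_l ↦ q x_l`. -/
def thetav (N l : ℕ) (f : Kg N) : Kg N :=
  if h : 1 ≤ l ∧ l ≤ N then thetaK N ⟨l - 1, by omega⟩ f else f

/-- The list (alphabet) `x_a, x_{a+1}, …, x_b`. -/
def XL (N a b : ℕ) : List (Kg N) := (List.range' a (b + 1 - a)).map (xv N)

/-- Scaling an alphabet by a constant. -/
def scaleL {A : Type*} [Mul A] (c : A) (L : List A) : List A := L.map (c * ·)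

/-- Complete homogeneous function `h_j` of a (listed) alphabet. -/
def hfun {A : Type*} [CommRing A] : List A → ℕ → A
  | _, 0 => 1
  | [], _ + 1 => 0
  | a :: l, j + 1 => hfun l (j + 1) + a * hfun (a :: l) j
  termination_by l j => (l.length, j)

/-- Elementary symmetric function `e_j` of a (listed) alphabet. -/
def efun {A : Type*} [CommRing A] : List A → ℕ → A
  | _, 0 => 1
  | [], _ + 1 => 0
  | a :: l, j + 1 => efun l (j + 1) + a * efun l j

/-- `S_j[P − M]`, the complete function of degree `j ∈ ℤ` of the difference of
two alphabets: `S_j[P−M] = Σ_{a+b=j} h_a[P]·(−1)^b e_b[M]`, and `0` for `j < 0`. -/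
def SJ {A : Type*} [CommRing A] (P M : List A) (j : ℤ) : A :=
  if 0 ≤ j then
    ∑ p ∈ Finset.range (j.toNat + 1), hfun P (j.toNat - p) * (-1 : A) ^ p * efun M p
  else 0

/-- `e_m[L]` with integer index (`0` for `m < 0`). -/
def EJ {A : Type*} [CommRing A] (L : List A) (m : ℤ) : A :=
  if 0 ≤ m then efun L m.toNat else 0

/-- The Jacobi–Trudi determinant: the Schur function `S_λ[P−M]` for a partition
given as a vector `lam : Fin n → ℕ`. -/
def schurJT {A : Type*} [CommRing A] (n : ℕ) (lam : Fin n → ℕ) (P M : List A) : A :=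
  (Matrix.of fun i j : Fin n => SJ P M ((lam i : ℤ) - (i : ℕ) + (j : ℕ))).det

/-- Skew Schur function `S_{α/η}[P−M]` for integer vectors `α, η` of length `k`. -/
def schurVec {A : Type*} [CommRing A] (k : ℕ) (α η : Fin k → ℤ) (P M : List A) : A :=
  (Matrix.of fun i j : Fin k => SJ P M (α i - (i : ℕ) + (j : ℕ) - η j)).det

/-- Power sum `p_i = x_1^i + ⋯ + x_N^i`. -/
def pK (N i : ℕ) : Kg N := ∑ l ∈ Finset.Icc 1 N, xv N l ^ i

/-- The modified complete functions `g_j = S_j[X(t−1)/(q−1)]`, defined through the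
recurrence `j·g_j = Σ_{i=1}^{j} ((t^i−1)/(q^i−1)) p_i g_{j−i}`, `g_0 = 1`. -/
def gK (N : ℕ) : ℕ → Kg N
  | 0 => 1
  | j + 1 =>
    ((j : Kg N) + 1)⁻¹ *
      ∑ i ∈ (Finset.Icc 1 (j + 1)).attach,
        ((tK N ^ (i : ℕ) - 1) / (qK N ^ (i : ℕ) - 1)) * pK N (i : ℕ) * gK N (j + 1 - (i : ℕ))
  termination_by j => j
  decreasing_by
    have := Finset.mem_Icc.mp i.2
    omega

/-- `g_m` with integer index (`0` for `m < 0`). -/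
def gz (N : ℕ) (m : ℤ) : Kg N := if 0 ≤ m then gK N m.toNat else 0

/-- The modified Schur function `S_λ[X^{tq}]` as a `k×k` Jacobi–Trudi determinant
in the `g_j`'s, for a partition `lam` with at most `k` parts. -/
def schurG (N k : ℕ) (lam : Fin k → ℕ) : Kg N :=
  (Matrix.of fun i j : Fin k => gz N ((lam i : ℤ) - (i : ℕ) + (j : ℕ))).det

/-- `∂_b ∘ ⋯ ∘ ∂_{a+1} ∘ ∂_a` (i.e. `∂_a` applied first). -/
def ddUp (N a b : ℕ) (f : Kg N) : Kg N :=
  (List.range' a (b + 1 - a)).foldl (fun g i => dd N i g) f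

/-- `∂_a ∘ ∂_{a+1} ∘ ⋯ ∘ ∂_b` (i.e. `∂_b` applied first). -/
def ddDown (N a b : ℕ) (f : Kg N) : Kg N :=
  (List.range' a (b + 1 - a)).reverse.foldl (fun g i => dd N i g) f

/-- `∂_{(k|n−k)} = (∂_{n−k}⋯∂_1)(∂_{n−k+1}⋯∂_2)⋯(∂_{n−1}⋯∂_k)`. -/
def ddSyl (N n k : ℕ) (f : Kg N) : Kg N :=
  (List.range k).foldl (fun g j => ddUp N (k - j) (n - 1 - j) g) f

/-- `∂_{ω(k)} = (∂_{k−1})(∂_{k−2}∂_{k−1})⋯(∂_1⋯∂_{k−1})`, the divided difference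
of the longest permutation of `S_k`. -/
def ddOmega (N k : ℕ) (f : Kg N) : Kg N :=
  (List.range (k - 1)).foldl (fun g j => ddDown N (j + 1) (k - 1) g) f

/-- The resultant `R(P,Q) = Π_{a∈P, b∈Q} (a−b)` of two (listed) alphabets. -/
def resL {A : Type*} [CommRing A] (P Q : List A) : A :=
  (P.map (fun a => (Q.map (fun b => a - b)).prod)).prod

/-- `χ^{(k)}_{(1|n−k)} f = ∂_{n−1}⋯∂_k ( R(x_k, X_k^c/t) · f )`. -/
def chi1 (N n k : ℕ) (f : Kg N) : Kg N :=
  ddUp N k (n - 1) (resL [xv N k] (scaleL (tK N)⁻¹ (XL N (k + 1) n)) * f)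

/-- `χ_{(k|n−k)} f = ∂_{(k|n−k)} ( R(X_k, X_k^c/t) · f )`. -/
def chiSyl (N n k : ℕ) (f : Kg N) : Kg N :=
  ddSyl N n k (resL (XL N 1 k) (scaleL (tK N)⁻¹ (XL N (k + 1) n)) * f)

/-- `χ_{ω(k)} f = ∂_{ω(k)} ( Π_{1≤i<j≤k} (x_i − x_j/t) · f )`. -/
def chiOmega (N k : ℕ) (f : Kg N) : Kg N :=
  ddOmega N k
    ((∏ i ∈ Finset.Icc 1 k, ∏ j ∈ Finset.Ioc i k, (xv N i - (tK N)⁻¹ * xv N j)) * f)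

/-- `Θ_{i_k}⋯Θ_{i_1}` for a set `I = {i_1 < ⋯ < i_k}` (smallest index applied first). -/
def thetaSet (N : ℕ) (I : Finset ℕ) (f : Kg N) : Kg N :=
  (I.sort (· ≤ ·)).foldl (fun g l => thetav N l g) f

/-- The Macdonald operator `M_l` in the variables `{x_i : i ∈ I}`:
`M_l^{(I)} = t^{l(l−1)/2} Σ_{J⊆I, |J|=l} R(tX_J, X_I∖X_J) Θ_J`. -/
def MacOp (N : ℕ) (I : Finset ℕ) (l : ℕ) (f : Kg N) : Kg N :=
  tK N ^ (l * (l - 1) / 2) *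
    ∑ J ∈ I.powersetCard l,
      (∏ a ∈ J, ∏ b ∈ I \ J, (tK N * xv N a - xv N b)) * thetaSet N J f

/-- The creation operator
`B_k^{(n)} = Σ_{|I|=k} Σ_{l=0}^{k} (−t)^l x^I (R(X_I,X_I^c/t)/R(X_I,X_I^c)) M_l^{(I)}`. -/
def BOp (N n k : ℕ) (f : Kg N) : Kg N :=
  ∑ I ∈ (Finset.Icc 1 n).powersetCard k, ∑ l ∈ Finset.range (k + 1),
    (-(tK N)) ^ l * (∏ i ∈ I, xv N i) *
      ((∏ a ∈ I, ∏ b ∈ Finset.Icc 1 n \ I, (xv N a - (tK N)⁻¹ * xv N b)) /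
        (∏ a ∈ I, ∏ b ∈ Finset.Icc 1 n \ I, (xv N a - xv N b))) *
      MacOp N I l f

/-- `ε(μ,α)`: the sign of the unique permutation `σ` with
`α_i = μ_{σ(i)} − σ(i) + i` for all `i`, and `0` if no such `σ` exists. -/
def eps (n : ℕ) (μ α : Fin n → ℕ) : ℤ :=
  if h : ∃ σ : Equiv.Perm (Fin n),
      ∀ i, (α i : ℤ) = (μ (σ i) : ℤ) - ((σ i : ℕ) : ℤ) + (i : ℕ) then
    Equiv.Perm.sign h.choose
  else 0

/-- `[|α|] = q^{α_1} t^{n−1} + q^{α_2} t^{n−2} + ⋯ + q^{α_n}`. -/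
def anorm (N n : ℕ) (α : Fin n → ℕ) : Kg N :=
  ∑ i : Fin n, qK N ^ (α i) * tK N ^ (n - 1 - (i : ℕ))

/-- `[|α|]_{t,q}`, i.e. `anorm` with `q` and `t` interchanged. -/
def anormT (N n : ℕ) (α : Fin n → ℕ) : Kg N :=
  ∑ i : Fin n, tK N ^ (α i) * qK N ^ (n - 1 - (i : ℕ))

/-- The finite set of all distinct rearrangements of a vector `ν ∈ ℕ^n`. -/
def permsOf (n : ℕ) (ν : Fin n → ℕ) : Finset (Fin n → ℕ) :=
  Finset.image (fun σ : Equiv.Perm (Fin n) => ν ∘ σ) Finset.univ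

/-- `[λ]_{μν}(q,t) = Σ_α ε(μ,α)·([|λ|] − [|α|])`, `α` ranging over distinct
rearrangements of `ν`. -/
def brackQT (N n : ℕ) (lam μ ν : Fin n → ℕ) : Kg N :=
  ∑ α ∈ permsOf n ν, (eps n μ α : Kg N) * (anorm N n lam - anorm N n α)

/-- `[λ]_{μν}(t,q)`: the same with `q` and `t` interchanged. -/
def brackTQ (N n : ℕ) (lam μ ν : Fin n → ℕ) : Kg N :=
  ∑ α ∈ permsOf n ν, (eps n μ α : Kg N) * (anormT N n lam - anormT N n α)

/-- The conjugate of a partition, as a vector of prescribed length `b`. -/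
def conjTo (a b : ℕ) (lam : Fin a → ℕ) : Fin b → ℕ :=
  fun j => (Finset.univ.filter (fun i : Fin a => (j : ℕ) + 1 ≤ lam i)).card

/-- Dominance order: `dominatedBy n a b` means `a ≤ b`, i.e.
`a_1 + ⋯ + a_i ≤ b_1 + ⋯ + b_i` for all `i`. -/
def dominatedBy (n : ℕ) (a b : Fin n → ℕ) : Prop :=
  ∀ p : Fin n, ∑ i ∈ Finset.Iic p, a i ≤ ∑ i ∈ Finset.Iic p, b i

/-- The Schur polynomial `S_μ[X_n]` inside `Kg N` (Jacobi–Trudi determinant in the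
complete functions of `x_1, …, x_n`). -/
def schurX (N n : ℕ) (μ : Fin n → ℕ) : Kg N := schurJT n μ (XL N 1 n) []

/-- The monomial symmetric polynomial `m_μ[X_n]` inside `Kg N`. -/
def msym (N n : ℕ) (μ : Fin n → ℕ) : Kg N :=
  ∑ α ∈ permsOf n μ, ∏ i : Fin n, xv N ((i : ℕ) + 1) ^ α i

/-- `t`-factorial `k_t! = t^{−k(k−1)/2} (t)_k/(1−t)^k`. -/
def ktfact (N k : ℕ) : Kg N :=
  tK N ^ (-((k * (k - 1) / 2 : ℕ) : ℤ)) *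
    (∏ i ∈ Finset.Icc 1 k, (1 - tK N ^ i)) / (1 - tK N) ^ k

/-- `Ω_k = σ_1 σ_2 ⋯ σ_{k−1} Θ_k`. -/
def omegaOp (N k : ℕ) (f : Kg N) : Kg N :=
  (List.range (k - 1)).foldl (fun g j => swapv N (k - 1 - j) (k - j) g) (thetav N k f)

/-- `(1−tΩ_k)(1−t²Ω_k)⋯(1−t^kΩ_k)`, composed in the order written
(the factor `(1−t^kΩ_k)` applied first). -/
def creationProd (N k : ℕ) (f : Kg N) : Kg N :=
  (List.range k).foldl (fun g j => g - tK N ^ (k - j) * omegaOp N k g) f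

/-- The exponent vector `(0,…,0,α_1,…,α_n) ∈ ℕ^{2n}` read at (1-based) position `i`. -/
def abar (n : ℕ) (α : Fin n → ℕ) (i : ℕ) : ℕ :=
  if h : n + 1 ≤ i ∧ i ≤ 2 * n then α ⟨i - n - 1, by omega⟩ else 0

/-- `x̄^{ρ−(0,…,0,α_1,…,α_n)} = Π_{i=1}^{2n} (−x_i)^{(i−1) − (0,…,0,α)_i}`. -/
def xbar (n : ℕ) (α : Fin n → ℕ) : Kg (2 * n) :=
  ∏ i ∈ Finset.Icc 1 (2 * n), (-(xv (2 * n) i)) ^ (i - 1 - abar n α i)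

/-- `⟨f⟩_{κν} = Σ_α ∂_ω( x̄^{ρ−(0,…,0,α)} f )·([|κ|]_{t,q} − [|α|]_{t,q})`,
`α` over distinct rearrangements of `ν`. -/
def brackF (n : ℕ) (f : Kg (2 * n)) (κ ν : Fin n → ℕ) : Kg (2 * n) :=
  ∑ α ∈ permsOf n ν,
    ddOmega (2 * n) (2 * n) (xbar n α * f) * (anormT (2 * n) n κ - anormT (2 * n) n α)

/-- The creation operator in `k` variables, `B_k^{(k)} = Σ_{l=0}^k (−t)^l x_1⋯x_k M_l^{(k)}`. -/
def BOpSelf (N k : ℕ) (f : Kg N) : Kg N :=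
  ∑ l ∈ Finset.range (k + 1),
    (-(tK N)) ^ l * (∏ i ∈ Finset.Icc 1 k, xv N i) * MacOp N (Finset.Icc 1 k) l f


section ListSym
variable {A : Type*} [CommRing A] {B : Type*} [CommRing B]

lemma hfun_zero (L : List A) : hfun L 0 = 1 := by cases L <;> simp [hfun]

lemma hfun_nil_pos {j : ℕ} (h : j ≠ 0) : hfun ([] : List A) j = 0 := by
  cases j with
  | zero => exact absurd rfl h
  | succ j => simp [hfun]

lemma hfun_cons_succ (a : A) (l : List A) (j : ℕ) :
    hfun (a :: l) (j + 1) = hfun l (j + 1) + a * hfun (a :: l) j := by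
  rw [hfun]

lemma efun_zero (L : List A) : efun L 0 = 1 := by cases L <;> simp [efun]

lemma efun_nil_pos {j : ℕ} (h : j ≠ 0) : efun ([] : List A) j = 0 := by
  cases j with
  | zero => exact absurd rfl h
  | succ j => simp [efun]

lemma efun_cons_succ (a : A) (l : List A) (j : ℕ) :
    efun (a :: l) (j + 1) = efun l (j + 1) + a * efun l j := by
  rw [efun]

theorem hfun_map (φ : A →+* B) : ∀ (L : List A) (j : ℕ),
    φ (hfun L j) = hfun (L.map φ) j
  | _, 0 => by simp [hfun_zero]
  | [], j + 1 => by simp [hfun_nil_pos]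
  | a :: l, j + 1 => by
    rw [hfun_cons_succ, map_add, map_mul, hfun_map φ l (j+1), hfun_map φ (a :: l) j]
    simp [hfun_cons_succ]
  termination_by L j => (L.length, j)

theorem efun_map (φ : A →+* B) : ∀ (L : List A) (j : ℕ),
    φ (efun L j) = efun (L.map φ) j
  | _, 0 => by simp [efun_zero]
  | [], j + 1 => by simp [efun_nil_pos]
  | a :: l, j + 1 => by
    rw [efun_cons_succ, map_add, map_mul, efun_map φ l (j+1), efun_map φ l j]
    simp [efun_cons_succ]

theorem hfun_single (x : A) : ∀ j : ℕ, hfun [x] j = x ^ j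
  | 0 => by simp [hfun_zero]
  | j + 1 => by
    rw [hfun_cons_succ, hfun_nil_pos (Nat.succ_ne_zero j), hfun_single x j]
    ring

lemma efun_single (x : A) (j : ℕ) : efun [x] j = if j = 0 then 1 else if j = 1 then x else 0 := by
  match j with
  | 0 => simp [efun_zero]
  | 1 => simp [efun_cons_succ, efun_nil_pos, efun_zero]
  | (j+2) => simp [efun_cons_succ, efun_nil_pos]

theorem hfun_scale (c : A) : ∀ (L : List A) (j : ℕ),
    hfun (scaleL c L) j = c ^ j * hfun L j
  | _, 0 => by simp [hfun_zero, scaleL]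
  | [], j + 1 => by simp [hfun_nil_pos, scaleL]
  | a :: l, j + 1 => by
    have h1 := hfun_scale c l (j+1)
    have h2 := hfun_scale c (a :: l) j
    simp only [scaleL, List.map_cons] at *
    rw [hfun_cons_succ, h1, h2, hfun_cons_succ]
    ring
  termination_by L j => (L.length, j)

theorem efun_scale (c : A) : ∀ (L : List A) (j : ℕ),
    efun (scaleL c L) j = c ^ j * efun L j
  | _, 0 => by simp [efun_zero, scaleL]
  | [], j + 1 => by simp [efun_nil_pos, scaleL]
  | a :: l, j + 1 => by
    have h1 := efun_scale c l (j+1)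
    have h2 := efun_scale c l j
    simp only [scaleL, List.map_cons] at *
    rw [efun_cons_succ, h1, h2, efun_cons_succ]
    ring

theorem efun_eq_zero : ∀ (L : List A) (j : ℕ), L.length < j → efun L j = 0
  | [], j, h => efun_nil_pos (by omega)
  | a :: l, j, h => by
    match j, h with
    | j + 1, h =>
      rw [efun_cons_succ, efun_eq_zero l (j+1) (by simp at h; omega)]
      rcases Nat.eq_zero_or_pos j with rfl | hj
      · simp at h
      · rw [efun_eq_zero l j (by simp at h; omega)]; ring

theorem efun_length_eq_prod : ∀ L : List A, efun L L.length = L.prod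
  | [] => by simp [efun_zero]
  | a :: l => by
    simp only [List.length_cons, List.prod_cons]
    rw [efun_cons_succ, efun_eq_zero l (l.length + 1) (by omega), efun_length_eq_prod l]
    ring

lemma efun_cons_swap (a b : A) (L : List A) (q : ℕ) :
    efun (a :: b :: L) q = efun (b :: a :: L) q := by
  match q with
  | 0 => simp [efun_zero]
  | 1 => simp [efun_cons_succ, efun_zero]; ring
  | (q+2) => simp [efun_cons_succ]; ring

/-- Expansion of `∏ (u - z)` into elementary symmetric functions. -/
theorem prod_sub_expand (u : A) : ∀ L : List A,
    (L.map (fun z => u - z)).prod =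
      ∑ q ∈ Finset.range (L.length + 1), (-1) ^ q * efun L q * u ^ (L.length - q)
  | [] => by simp [efun_zero]
  | a :: L => by
    rw [List.map_cons, List.prod_cons, prod_sub_expand u L]
    rw [Finset.mul_sum]
    have expand : ∀ q ∈ Finset.range (L.length + 1),
        (u - a) * ((-1) ^ q * efun L q * u ^ (L.length - q)) =
          (-1) ^ q * efun L q * u ^ (L.length + 1 - q)
            + (-1) ^ (q+1) * (a * efun L q) * u ^ (L.length - q) := by
      intro q hq
      rw [Finset.mem_range] at hq
      have : L.length + 1 - q = (L.length - q) + 1 := by omega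
      rw [this, pow_succ]
      ring
    rw [Finset.sum_congr rfl expand, Finset.sum_add_distrib]
    symm
    simp only [List.length_cons]
    -- target sum over (a::L)
    have main : ∀ q ∈ Finset.range (L.length + 1 + 1),
        (-1) ^ q * efun (a :: L) q * u ^ (L.length + 1 - q) =
          (-1) ^ q * efun L q * u ^ (L.length + 1 - q)
            + (if q = 0 then 0 else (-1) ^ q * (a * efun L (q-1)) * u ^ (L.length + 1 - q)) := by
      intro q hq
      match q with
      | 0 => simp [efun_zero]
      | q + 1 =>
        simp only [if_neg (Nat.succ_ne_zero q)]
        rw [efun_cons_succ]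
        simp only [Nat.add_sub_cancel]
        ring
    rw [Finset.sum_congr rfl main, Finset.sum_add_distrib]
    symm
    congr 1
    · -- first parts: extra top term vanishes since efun L (len+1) = 0
      conv_rhs => rw [Finset.sum_range_succ]
      rw [efun_eq_zero L (L.length + 1) (by omega)]
      simp
    · -- second parts: reindex
      conv_rhs => rw [Finset.sum_range_succ']
      simp only [if_neg (Nat.succ_ne_zero _), Nat.add_sub_cancel, if_pos rfl, add_zero]
      rw [if_pos trivial, add_zero]
      apply Finset.sum_congr rfl
      intro q hq
      rw [Finset.mem_range] at hq
      have : L.length + 1 - (q + 1) = L.length - q := by omega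
      rw [this]

end ListSym
section PSLayer
variable {K : Type*} [Field K]

/-- Generating series of the complete functions of a list. -/
noncomputable def HSps (L : List K) : PowerSeries K := PowerSeries.mk (hfun L)

/-- Generating series of the signed elementary functions of a list. -/
noncomputable def GSps (M : List K) : PowerSeries K :=
  PowerSeries.mk (fun b => (-1 : K) ^ b * efun M b)

lemma oneSub_ne_zero (a : K) : (1 - PowerSeries.C (R := K) a * PowerSeries.X) ≠ 0 := by
  intro h
  have := congrArg (PowerSeries.constantCoeff (R := K)) h
  simp at this

lemma HS_key (a : K) (L : List K) :
    (1 - PowerSeries.C (R := K) a * PowerSeries.X) * HSps (a :: L) = HSps L := by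
  ext j
  rw [sub_mul, one_mul, map_sub, mul_assoc]
  cases j with
  | zero =>
    simp [HSps, hfun_zero, PowerSeries.coeff_zero_eq_constantCoeff, map_mul]
  | succ j =>
    rw [PowerSeries.coeff_C_mul, PowerSeries.coeff_succ_X_mul]
    simp only [HSps, PowerSeries.coeff_mk]
    rw [hfun_cons_succ]
    ring

lemma GS_key (a : K) (M : List K) :
    GSps (a :: M) = (1 - PowerSeries.C (R := K) a * PowerSeries.X) * GSps M := by
  ext j
  rw [sub_mul, one_mul, map_sub, mul_assoc]
  cases j with
  | zero =>
    simp [GSps, efun_zero, PowerSeries.coeff_zero_eq_constantCoeff, map_mul]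
  | succ j =>
    rw [PowerSeries.coeff_C_mul, PowerSeries.coeff_succ_X_mul]
    simp only [GSps, PowerSeries.coeff_mk]
    rw [efun_cons_succ, pow_succ]
    ring

lemma HS_nil : HSps ([] : List K) = 1 := by
  ext j
  cases j with
  | zero => simp [HSps, hfun_zero]
  | succ j => simp [HSps, hfun_nil_pos, PowerSeries.coeff_one]

lemma GS_nil : GSps ([] : List K) = 1 := by
  ext j
  cases j with
  | zero => simp [GSps, efun_zero]
  | succ j => simp [GSps, efun_nil_pos, PowerSeries.coeff_one]

lemma HS_append (L1 L2 : List K) : HSps (L1 ++ L2) = HSps L1 * HSps L2 := by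
  induction L1 with
  | nil => simp [HS_nil]
  | cons a L1 ih =>
    apply mul_left_cancel₀ (oneSub_ne_zero a)
    rw [show (a :: L1) ++ L2 = a :: (L1 ++ L2) from rfl, HS_key, ih, ← mul_assoc, HS_key]

lemma GS_append (M1 M2 : List K) : GSps (M1 ++ M2) = GSps M1 * GSps M2 := by
  induction M1 with
  | nil => simp [GS_nil]
  | cons a M1 ih =>
    rw [show (a :: M1) ++ M2 = a :: (M1 ++ M2) from rfl, GS_key, ih, GS_key, mul_assoc]

lemma SJ_coeff (P M : List K) (j : ℕ) :
    SJ P M (j : ℤ) = PowerSeries.coeff (R := K) j (HSps P * GSps M) := by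
  rw [PowerSeries.coeff_mul]
  rw [SJ, if_pos (Int.natCast_nonneg j), Int.toNat_natCast]
  have swapped : ∑ p ∈ Finset.HasAntidiagonal.antidiagonal j,
      PowerSeries.coeff (R := K) p.1 (HSps P) * PowerSeries.coeff (R := K) p.2 (GSps M)
      = ∑ p ∈ Finset.HasAntidiagonal.antidiagonal j,
        (fun p : ℕ × ℕ => PowerSeries.coeff (R := K) p.2 (HSps P) * PowerSeries.coeff (R := K) p.1 (GSps M)) p := by
    rw [← Finset.Nat.sum_antidiagonal_swap]
    rfl
  rw [swapped, Finset.Nat.sum_antidiagonal_eq_sum_range_succ_mk]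
  apply Finset.sum_congr rfl
  intro p hp
  simp only [HSps, GSps, PowerSeries.coeff_mk]
  ring

lemma SJ_mul (P1 P2 M1 M2 : List K) (j : ℕ) :
    SJ (P1 ++ P2) (M1 ++ M2) (j : ℤ) =
      ∑ p ∈ Finset.HasAntidiagonal.antidiagonal j, SJ P1 M1 (p.1 : ℤ) * SJ P2 M2 (p.2 : ℤ) := by
  rw [SJ_coeff, HS_append, GS_append]
  have h : HSps P1 * HSps P2 * (GSps M1 * GSps M2)
      = (HSps P1 * GSps M1) * (HSps P2 * GSps M2) := by ring
  rw [h, PowerSeries.coeff_mul]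
  exact Finset.sum_congr rfl fun p _ => by rw [SJ_coeff, SJ_coeff]

lemma hfun_append (L1 L2 : List K) (j : ℕ) :
    hfun (L1 ++ L2) j = ∑ p ∈ Finset.HasAntidiagonal.antidiagonal j, hfun L1 p.1 * hfun L2 p.2 := by
  have h := congrArg (PowerSeries.coeff (R := K) j) (HS_append L1 L2)
  simpa [HSps, PowerSeries.coeff_mul, PowerSeries.coeff_mk] using h

lemma hfun_pair (x y : K) (d : ℕ) :
    hfun [x, y] d = ∑ i ∈ Finset.range (d + 1), x ^ i * y ^ (d - i) := by
  rw [show [x, y] = [x] ++ [y] from rfl, hfun_append,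
    Finset.Nat.sum_antidiagonal_eq_sum_range_succ_mk]
  simp [hfun_single]

lemma SJ_nat (P M : List K) (j : ℕ) :
    SJ P M (j : ℤ) = ∑ p ∈ Finset.range (j + 1),
      hfun P (j - p) * (-1 : K) ^ p * efun M p := by
  rw [SJ, if_pos (Int.natCast_nonneg j), Int.toNat_natCast]

end PSLayer
section ListSym2
variable {A : Type*} [CommRing A] {B : Type*} [CommRing B]

/-- `h_d` with integer index. -/
def Hz (L : List A) (d : ℤ) : A := if 0 ≤ d then hfun L d.toNat else 0

lemma Hz_neg (L : List A) {d : ℤ} (h : d < 0) : Hz L d = 0 := by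
  rw [Hz, if_neg (by omega)]

lemma Hz_natCast (L : List A) (d : ℕ) : Hz L (d : ℤ) = hfun L d := by
  rw [Hz, if_pos (Int.natCast_nonneg d), Int.toNat_natCast]

theorem efun_middle_swap (a b : A) (L2 : List A) :
    ∀ (L1 : List A) (q : ℕ), efun (L1 ++ a :: b :: L2) q = efun (L1 ++ b :: a :: L2) q := by
  intro L1
  induction L1 with
  | nil => intro q; exact efun_cons_swap a b L2 q
  | cons c L1 ih =>
    intro q
    cases q with
    | zero => rw [efun_zero, efun_zero]
    | succ q =>
      rw [List.cons_append, List.cons_append, efun_cons_succ, efun_cons_succ, ih, ih]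

theorem SJ_ringHom_map (φ : A →+* B) (P M : List A) (j : ℤ) :
    φ (SJ P M j) = SJ (P.map φ) (M.map φ) j := by
  rw [SJ, SJ]
  split_ifs with h
  · rw [map_sum]
    apply Finset.sum_congr rfl
    intro p _
    rw [map_mul, map_mul, map_pow, map_neg, map_one, hfun_map, efun_map]
  · exact map_zero φ

lemma scaleL_map (φ : A →+* B) (c : A) (L : List A) :
    (scaleL c L).map φ = scaleL (φ c) (L.map φ) := by
  unfold scaleL
  rw [List.map_map, List.map_map]
  apply List.map_congr_left
  intro a _
  exact map_mul φ c a

end ListSym2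

section KgBasics
variable (N : ℕ)

lemma algebraMap_Kg_injective : Function.Injective (algebraMap (Rg N) (Kg N)) :=
  IsFractionRing.injective _ _

lemma xv_eq {i : ℕ} (h1 : 1 ≤ i) (h2 : i ≤ N) :
    xv N i = algebraMap (Rg N) (Kg N) (X ⟨i - 1, by omega⟩) := by
  rw [xv, dif_pos ⟨h1, h2⟩]

lemma xv_invalid {i : ℕ} (h : ¬(1 ≤ i ∧ i ≤ N)) : xv N i = 0 := by
  rw [xv, dif_neg h]

lemma xv_ne_zero {i : ℕ} (h1 : 1 ≤ i) (h2 : i ≤ N) : xv N i ≠ 0 := by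
  rw [xv_eq N h1 h2]
  intro h
  have h0 : (X ⟨i - 1, by omega⟩ : Rg N) = 0 := by
    apply algebraMap_Kg_injective N
    rw [h, map_zero]
  exact MvPolynomial.X_ne_zero _ h0

lemma xv_ne {i l : ℕ} (h1 : 1 ≤ i) (h2 : i ≤ N) (h3 : 1 ≤ l) (h4 : l ≤ N)
    (hne : i ≠ l) : xv N i ≠ xv N l := by
  rw [xv_eq N h1 h2, xv_eq N h3 h4]
  intro h
  have h0 := MvPolynomial.X_injective (algebraMap_Kg_injective N h)
  rw [Fin.mk.injEq] at h0
  omega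

lemma tF_ne_zero : tF ≠ 0 := by
  have h : Function.Injective (algebraMap (MvPolynomial (Fin 2) ℚ) Fqt) :=
    IsFractionRing.injective _ _
  intro ht
  exact MvPolynomial.X_ne_zero (R := ℚ) (1 : Fin 2) (h (by rw [map_zero]; exact ht))

lemma tF_ne_one : tF ≠ 1 := by
  have h : Function.Injective (algebraMap (MvPolynomial (Fin 2) ℚ) Fqt) :=
    IsFractionRing.injective _ _
  intro ht
  have h1 : (X 1 : MvPolynomial (Fin 2) ℚ) = 1 := h (by rw [map_one]; exact ht)
  have := congrArg MvPolynomial.constantCoeff h1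
  simp at this

lemma cK_injective : Function.Injective (cK N) := by
  intro a b h
  exact MvPolynomial.C_injective _ _ (algebraMap_Kg_injective N h)

lemma cK_one : cK N (1 : Fqt) = 1 := by rw [cK, map_one, map_one]

lemma tK_ne_zero : tK N ≠ 0 := by
  rw [tK]
  intro h
  exact tF_ne_zero (cK_injective N (by rw [h, cK, map_zero, map_zero]))

lemma tK_ne_one : tK N ≠ 1 := by
  rw [tK]
  intro h
  rw [← cK_one N] at h
  exact tF_ne_one (cK_injective N h)

lemma tK_sub_one_ne_zero : tK N - 1 ≠ 0 := sub_ne_zero.mpr (tK_ne_one N)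

/-- `swapv` as a ring hom. -/
noncomputable def swRH (a b : ℕ) : Kg N →+* Kg N :=
  if h : 1 ≤ a ∧ a ≤ N ∧ 1 ≤ b ∧ b ≤ N then
    (swapK N ⟨a - 1, by omega⟩ ⟨b - 1, by omega⟩).toRingHom else RingHom.id _

lemma swapv_eq_swRH (a b : ℕ) (f : Kg N) : swapv N a b f = swRH N a b f := by
  rw [swapv, swRH]
  split_ifs with h <;> rfl

lemma swapv_add (a b : ℕ) (f g : Kg N) :
    swapv N a b (f + g) = swapv N a b f + swapv N a b g := by
  simp only [swapv_eq_swRH, map_add]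

lemma swapv_mul (a b : ℕ) (f g : Kg N) :
    swapv N a b (f * g) = swapv N a b f * swapv N a b g := by
  simp only [swapv_eq_swRH, map_mul]

lemma swapv_sub (a b : ℕ) (f g : Kg N) :
    swapv N a b (f - g) = swapv N a b f - swapv N a b g := by
  simp only [swapv_eq_swRH, map_sub]

lemma swapv_zero (a b : ℕ) : swapv N a b 0 = 0 := by
  simp only [swapv_eq_swRH, map_zero]

lemma swapv_one (a b : ℕ) : swapv N a b 1 = 1 := by
  simp only [swapv_eq_swRH, map_one]

lemma swapv_pow (a b : ℕ) (f : Kg N) (q : ℕ) :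
    swapv N a b (f ^ q) = swapv N a b f ^ q := by
  simp only [swapv_eq_swRH, map_pow]

lemma swapv_neg (a b : ℕ) (f : Kg N) : swapv N a b (-f) = -swapv N a b f := by
  simp only [swapv_eq_swRH, map_neg]

lemma swapv_inv (a b : ℕ) (f : Kg N) : swapv N a b f⁻¹ = (swapv N a b f)⁻¹ := by
  simp only [swapv_eq_swRH, map_inv₀]

lemma swapK_algebraMap (a b : Fin N) (p : Rg N) :
    swapK N a b (algebraMap (Rg N) (Kg N) p) =
      algebraMap (Rg N) (Kg N) (rename (⇑(Equiv.swap a b)) p) := by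
  rw [swapK, IsFractionRing.ringEquivOfRingEquiv_algebraMap]
  congr 1

lemma swapv_cK (a b : ℕ) (c : Fqt) : swapv N a b (cK N c) = cK N c := by
  rw [swapv]
  split_ifs with h
  · rw [cK, swapK_algebraMap, rename_C]
  · rfl

lemma swapv_xv {i : ℕ} (l : ℕ) (h1 : 1 ≤ i) (h2 : i + 1 ≤ N) :
    swapv N i (i + 1) (xv N l) =
      xv N (if l = i then i + 1 else if l = i + 1 then i else l) := by
  by_cases hl : 1 ≤ l ∧ l ≤ N
  · rw [swapv, dif_pos ⟨h1, by omega, by omega, by omega⟩]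
    rw [xv_eq N hl.1 hl.2, swapK_algebraMap, rename_X]
    rcases eq_or_ne l i with h | hli
    · rw [if_pos h]
      have e1 : (⟨l - 1, by omega⟩ : Fin N) = ⟨i - 1, by omega⟩ := by
        apply Fin.ext; simp; omega
      rw [e1, Equiv.swap_apply_left, xv_eq N (by omega : 1 ≤ i + 1) (by omega)]
    · rcases eq_or_ne l (i + 1) with h | hli1
      · rw [if_neg hli, if_pos h]
        have e1 : (⟨l - 1, by omega⟩ : Fin N) = ⟨i + 1 - 1, by omega⟩ := by
          apply Fin.ext; simp; omega
        rw [e1, Equiv.swap_apply_right, xv_eq N h1 (by omega)]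
      · rw [if_neg hli, if_neg hli1, xv_eq N hl.1 hl.2]
        congr 2
        apply Equiv.swap_apply_of_ne_of_ne
        · intro h; rw [Fin.mk.injEq] at h; omega
        · intro h; rw [Fin.mk.injEq] at h; omega
  · -- invalid l
    have hni : l ≠ i := by omega
    have hni1 : l ≠ i + 1 := by omega
    rw [if_neg hni, if_neg hni1, xv_invalid N hl, swapv_zero]

end KgBasics
section DDLayer
variable (N : ℕ)

lemma dd_apply {i : ℕ} (h1 : 1 ≤ i) (h2 : i + 1 ≤ N) (f : Kg N) :
    dd N i f = (f - swapv N i (i + 1) f) / (xv N i - xv N (i + 1)) := by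
  rw [dd, if_pos ⟨h1, h2⟩]

lemma xv_sub_ne_zero {i : ℕ} (h1 : 1 ≤ i) (h2 : i + 1 ≤ N) :
    xv N i - xv N (i + 1) ≠ 0 :=
  sub_ne_zero.mpr (xv_ne N h1 (by omega) (by omega) h2 (by omega))

lemma dd_add (i : ℕ) (f g : Kg N) : dd N i (f + g) = dd N i f + dd N i g := by
  rw [dd, dd, dd]
  split_ifs with h
  · rw [swapv_add]; ring
  · rw [add_zero]

lemma dd_zero (i : ℕ) : dd N i 0 = 0 := by
  rw [dd]
  split_ifs with h
  · rw [swapv_zero, sub_zero, zero_div]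
  · rfl

lemma dd_sum {ι : Type*} (i : ℕ) (S : Finset ι) (f : ι → Kg N) :
    dd N i (∑ s ∈ S, f s) = ∑ s ∈ S, dd N i (f s) :=
  map_sum (AddMonoidHom.mk' (dd N i) (dd_add N i)) f S

lemma dd_scal (i : ℕ) (γ f : Kg N) (hγ : swapv N i (i + 1) γ = γ) :
    dd N i (γ * f) = γ * dd N i f := by
  rw [dd, dd]
  split_ifs with h
  · rw [swapv_mul, hγ]; ring
  · rw [mul_zero]

lemma dd_pow {i : ℕ} (h1 : 1 ≤ i) (h2 : i + 1 ≤ N) (q : ℕ) :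
    dd N i (xv N i ^ q) = Hz [xv N i, xv N (i + 1)] ((q : ℤ) - 1) := by
  cases q with
  | zero =>
    rw [pow_zero, dd_apply N h1 h2, swapv_one, sub_self, zero_div, Hz_neg _ (by omega)]
  | succ q =>
    rw [dd_apply N h1 h2, swapv_pow, swapv_xv N i h1 h2, if_pos rfl]
    have hz : ((q : ℤ) + 1 - 1) = (q : ℤ) := by ring
    rw [show ((q + 1 : ℕ) : ℤ) - 1 = (q : ℤ) by push_cast; ring, Hz_natCast, hfun_pair]
    rw [div_eq_iff (xv_sub_ne_zero N h1 h2)]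
    have := geom_sum₂_mul (xv N i) (xv N (i + 1)) (q + 1)
    simp only [Nat.add_sub_cancel] at this
    exact this.symm

lemma dd_inv {i : ℕ} (h1 : 1 ≤ i) (h2 : i + 1 ≤ N) :
    dd N i (xv N i)⁻¹ = -(xv N i * xv N (i + 1))⁻¹ := by
  rw [dd_apply N h1 h2, swapv_inv, swapv_xv N i h1 h2, if_pos rfl]
  have hx : xv N i ≠ 0 := xv_ne_zero N h1 (by omega)
  have hy : xv N (i + 1) ≠ 0 := xv_ne_zero N (by omega) h2
  have hxy : xv N i - xv N (i + 1) ≠ 0 := xv_sub_ne_zero N h1 h2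
  have key : (xv N i)⁻¹ - (xv N (i + 1))⁻¹
      = -(xv N i * xv N (i + 1))⁻¹ * (xv N i - xv N (i + 1)) := by
    rw [inv_sub_inv hx hy, div_eq_mul_inv]
    ring
  rw [key, mul_div_assoc, div_self hxy, mul_one]

lemma ddUp_le (a b : ℕ) (h : b + 1 ≤ a) (f : Kg N) : ddUp N a b f = f := by
  rw [ddUp, show b + 1 - a = 0 by omega]
  rfl

lemma ddUp_cons (a b : ℕ) (h : a ≤ b) (f : Kg N) :
    ddUp N a b f = ddUp N (a + 1) b (dd N a f) := by
  rw [ddUp, ddUp, show b + 1 - a = (b + 1 - (a + 1)) + 1 by omega, List.range'_succ]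
  rfl

lemma foldl_dd_sum {ι : Type*} (S : Finset ι) :
    ∀ (l : List ℕ) (f : ι → Kg N),
      List.foldl (fun g i => dd N i g) (∑ s ∈ S, f s) l
        = ∑ s ∈ S, List.foldl (fun g i => dd N i g) (f s) l
  | [], f => by simp
  | i :: l, f => by
    rw [List.foldl_cons, dd_sum, foldl_dd_sum S l (fun s => dd N i (f s))]
    simp only [List.foldl_cons]

lemma ddUp_sum {ι : Type*} (a b : ℕ) (S : Finset ι) (f : ι → Kg N) :
    ddUp N a b (∑ s ∈ S, f s) = ∑ s ∈ S, ddUp N a b (f s) := by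
  simp only [ddUp]
  exact foldl_dd_sum N S _ f

lemma ddUp_scal (a b : ℕ) (γ : Kg N)
    (hγ : ∀ i, a ≤ i → i ≤ b → swapv N i (i + 1) γ = γ) :
    ∀ (s : ℕ) (a' : ℕ) (f : Kg N), a ≤ a' → b + 1 - a' = s →
      ddUp N a' b (γ * f) = γ * ddUp N a' b f := by
  intro s
  induction s with
  | zero => intro a' f ha hs; rw [ddUp_le N a' b (by omega), ddUp_le N a' b (by omega)]
  | succ s ih =>
    intro a' f ha hs
    rw [ddUp_cons N a' b (by omega), ddUp_cons N a' b (by omega),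
      dd_scal N a' γ f (hγ a' ha (by omega))]
    exact ih (a' + 1) (dd N a' f) (by omega) (by omega)

end DDLayer

section XLLayer
variable (N : ℕ)

lemma XL_empty {a b : ℕ} (h : b < a) : XL N a b = [] := by
  rw [XL, show b + 1 - a = 0 by omega]
  rfl

lemma XL_single (a : ℕ) : XL N a a = [xv N a] := by
  rw [XL, show a + 1 - a = 1 by omega]
  rfl

lemma XL_cons {a b : ℕ} (h : a ≤ b) : XL N a b = xv N a :: XL N (a + 1) b := by
  rw [XL, XL, show b + 1 - a = (b + 1 - (a + 1)) + 1 by omega, List.range'_succ]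
  rfl

lemma XL_concat {a b : ℕ} (h0 : 1 ≤ a) (h : a ≤ b) : XL N a b = XL N a (b - 1) ++ [xv N b] := by
  rw [XL, XL, show b + 1 - a = (b - 1 + 1 - a) + 1 by omega, List.range'_concat,
    show a + 1 * (b - 1 + 1 - a) = b by omega, List.map_append]
  rfl

lemma XL_append {a c b : ℕ} (h1 : a ≤ c + 1) (h2 : c ≤ b) :
    XL N a b = XL N a c ++ XL N (c + 1) b := by
  have key := List.range'_append (s := a) (m := c + 1 - a) (n := b - c) (step := 1)
  simp only [one_mul] at key
  rw [show a + (c + 1 - a) = c + 1 by omega, show c + 1 - a + (b - c) = b + 1 - a by omega] at key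
  rw [XL, XL, XL, ← List.map_append]
  congr 1
  rw [show b + 1 - (c + 1) = b - c by omega]
  exact key.symm

lemma XL_length (a b : ℕ) : (XL N a b).length = b + 1 - a := by
  rw [XL, List.length_map, List.length_range']

lemma XL_pair (i : ℕ) : XL N i (i + 1) = [xv N i, xv N (i + 1)] := by
  rw [XL, show i + 1 + 1 - i = 2 by omega]
  rfl

/-- Mapping `swapv` over an `XL`-segment avoiding `i, i+1` leaves it unchanged. -/
lemma map_swapv_XL {i : ℕ} (a b : ℕ) (h1 : 1 ≤ i) (h2 : i + 1 ≤ N)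
    (h : ∀ l, a ≤ l → l ≤ b → l ≠ i ∧ l ≠ i + 1) :
    (XL N a b).map (swapv N i (i + 1)) = XL N a b := by
  rw [XL, List.map_map]
  apply List.map_congr_left
  intro l hl
  rw [List.mem_range'_1] at hl
  have hb : a ≤ l ∧ l ≤ b := by omega
  have := h l hb.1 hb.2
  simp only [Function.comp_apply]
  rw [swapv_xv N l h1 h2, if_neg this.1, if_neg this.2]

end XLLayer
section ChainLayer
variable (N : ℕ)

lemma swRH_coe (a b : ℕ) : ⇑(swRH N a b) = swapv N a b :=
  funext fun f => (swapv_eq_swRH N a b f).symm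

lemma swapv_hfun_XL {i : ℕ} (a b : ℕ) (h1 : 1 ≤ i) (h2 : i + 1 ≤ N)
    (h : ∀ l, a ≤ l → l ≤ b → l ≠ i ∧ l ≠ i + 1) (d : ℕ) :
    swapv N i (i + 1) (hfun (XL N a b) d) = hfun (XL N a b) d := by
  rw [swapv_eq_swRH, hfun_map, swRH_coe, map_swapv_XL N a b h1 h2 h]

lemma swapv_list_prod (a b : ℕ) (L : List (Kg N)) :
    swapv N a b L.prod = (L.map (swapv N a b)).prod := by
  rw [swapv_eq_swRH, map_list_prod, swRH_coe]

lemma swapv_prod_XL {i : ℕ} (a b : ℕ) (h1 : 1 ≤ i) (h2 : i + 1 ≤ N)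
    (h : ∀ l, a ≤ l → l ≤ b → l ≠ i ∧ l ≠ i + 1) :
    swapv N i (i + 1) (XL N a b).prod = (XL N a b).prod := by
  rw [swapv_list_prod, map_swapv_XL N a b h1 h2 h]

lemma dd_hfun_step {k r n : ℕ} (hk : 1 ≤ k) (hkr : k ≤ r) (hrn : r + 1 ≤ n)
    (hnN : n ≤ N) (c : ℤ) :
    dd N r (Hz (XL N k r) c) = Hz (XL N k (r + 1)) (c - 1) := by
  rcases lt_or_ge c 0 with hc | hc
  · rw [Hz_neg _ hc, Hz_neg _ (by omega), dd_zero]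
  · obtain ⟨c', rfl⟩ : ∃ c' : ℕ, c = (c' : ℤ) := ⟨c.toNat, (Int.toNat_of_nonneg hc).symm⟩
    rw [Hz_natCast, XL_concat N hk hkr, hfun_append, dd_sum]
    have hfix : ∀ p : ℕ, swapv N r (r + 1) (hfun (XL N k (r - 1)) p)
        = hfun (XL N k (r - 1)) p := by
      intro p
      exact swapv_hfun_XL N k (r - 1) (by omega) (by omega) (fun l hl1 hl2 => by omega) p
    have step : ∀ p ∈ Finset.HasAntidiagonal.antidiagonal c',
        dd N r (hfun (XL N k (r - 1)) p.1 * hfun [xv N r] p.2)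
          = hfun (XL N k (r - 1)) p.1 * Hz [xv N r, xv N (r + 1)] ((p.2 : ℤ) - 1) := by
      intro p _
      rw [hfun_single, dd_scal N r _ _ (hfix p.1), dd_pow N (by omega) (by omega)]
    rw [Finset.sum_congr rfl step]
    have hXR : XL N k (r + 1) = XL N k (r - 1) ++ [xv N r, xv N (r + 1)] := by
      rw [XL_append N (a := k) (c := r - 1) (b := r + 1) (by omega) (by omega)]
      congr 1
      rw [show r - 1 + 1 = r by omega]
      exact XL_pair N r
    cases c' with
    | zero =>
      rw [show ((0 : ℕ) : ℤ) - 1 = (-1 : ℤ) by ring, Hz_neg _ (by omega)]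
      simp [Hz_neg]
    | succ c'' =>
      rw [show ((c'' + 1 : ℕ) : ℤ) - 1 = ((c'' : ℕ) : ℤ) by push_cast; ring, Hz_natCast]
      rw [hXR, hfun_append]
      rw [Finset.Nat.antidiagonal_succ', Finset.sum_cons, Finset.sum_map]
      rw [Hz_neg _ (by omega), mul_zero, zero_add]
      apply Finset.sum_congr rfl
      intro p _
      simp only [Function.Embedding.coe_prodMap, Function.Embedding.coeFn_mk,
        Function.Embedding.refl_apply, Prod.map_fst, Prod.map_snd]
      rw [show ((p.2.succ : ℕ) : ℤ) - 1 = ((p.2 : ℕ) : ℤ) by push_cast; ring, Hz_natCast]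

lemma chainH {k n : ℕ} (hk : 1 ≤ k) (hnN : n ≤ N) :
    ∀ (s r : ℕ), k ≤ r → r + s = n → ∀ c : ℤ,
      ddUp N r (n - 1) (Hz (XL N k r) c) = Hz (XL N k n) (c - s) := by
  intro s
  induction s with
  | zero =>
    intro r hkr hrn c
    rw [ddUp_le N r (n - 1) (by omega)]
    rw [show r = n by omega]
    norm_num
  | succ s ih =>
    intro r hkr hrn c
    rw [ddUp_cons N r (n - 1) (by omega), dd_hfun_step N hk hkr (by omega) hnN c,
      ih (r + 1) (by omega) (by omega) (c - 1)]
    congr 1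
    push_cast
    ring

lemma dd_inv_step {k r : ℕ} (hk : 1 ≤ k) (hkr : k ≤ r) (hr1 : r + 1 ≤ N) :
    dd N r ((XL N k r).prod)⁻¹ = -((XL N k (r + 1)).prod)⁻¹ := by
  have hfix : swapv N r (r + 1) (((XL N k (r - 1)).prod)⁻¹)
      = ((XL N k (r - 1)).prod)⁻¹ := by
    rw [swapv_inv, swapv_prod_XL N k (r - 1) (by omega) (by omega)
      (fun l hl1 hl2 => by omega)]
  rw [XL_concat N hk hkr, List.prod_append, List.prod_singleton, mul_inv,
    dd_scal N r _ _ hfix, dd_inv N (by omega) hr1]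
  have hXR : XL N k (r + 1) = (XL N k (r - 1) ++ [xv N r]) ++ [xv N (r + 1)] := by
    rw [XL_concat N hk (show k ≤ r + 1 by omega), show r + 1 - 1 = r by omega,
      XL_concat N hk hkr]
  rw [hXR, List.prod_append, List.prod_append, List.prod_singleton, List.prod_singleton,
    mul_inv, mul_inv, mul_inv]
  ring

lemma ddUp_neg (a b : ℕ) (f : Kg N) : ddUp N a b (-f) = -ddUp N a b f := by
  have h := ddUp_scal N a b (-1) (fun i _ _ => by rw [swapv_neg, swapv_one])
    (b + 1 - a) a f (le_refl a) rfl
  rw [show (-1 : Kg N) * f = -f by ring, show (-1 : Kg N) * ddUp N a b f = -ddUp N a b f by ring] at h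
  exact h

lemma chainInv {k n : ℕ} (hk : 1 ≤ k) (hnN : n ≤ N) :
    ∀ (s r : ℕ), k ≤ r → r + s = n →
      ddUp N r (n - 1) (((XL N k r).prod)⁻¹)
        = (-1) ^ s * ((XL N k n).prod)⁻¹ := by
  intro s
  induction s with
  | zero =>
    intro r hkr hrn
    rw [ddUp_le N r (n - 1) (by omega), show r = n by omega]
    norm_num
  | succ s ih =>
    intro r hkr hrn
    rw [ddUp_cons N r (n - 1) (by omega), dd_inv_step N hk hkr (by omega),
      ddUp_neg, ih (r + 1) (by omega) (by omega)]
    ring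

end ChainLayer
section EvalLayer
variable (N : ℕ)

lemma ddUp_scal' (a b : ℕ) (γ f : Kg N)
    (hγ : ∀ i, a ≤ i → i ≤ b → swapv N i (i + 1) γ = γ) :
    ddUp N a b (γ * f) = γ * ddUp N a b f :=
  ddUp_scal N a b γ hγ (b + 1 - a) a f (le_refl a) rfl

lemma swapv_tK (a b : ℕ) : swapv N a b (tK N) = tK N := swapv_cK N a b tF

lemma swapv_div (a b : ℕ) (f g : Kg N) :
    swapv N a b (f / g) = swapv N a b f / swapv N a b g := by
  simp only [swapv_eq_swRH, map_div₀]

lemma swapv_efun_XLkn {i k n : ℕ} (hk : 1 ≤ k) (hki : k ≤ i) (hin : i + 1 ≤ n)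
    (hnN : n ≤ N) (q : ℕ) :
    swapv N i (i + 1) (efun (XL N k n) q) = efun (XL N k n) q := by
  have h1 : 1 ≤ i := by omega
  have h2 : i + 1 ≤ N := by omega
  have hdec : XL N k n = (XL N k (i - 1) ++ [xv N i, xv N (i + 1)]) ++ XL N (i + 2) n := by
    rw [XL_append N (a := k) (c := i + 1) (b := n) (by omega) (by omega),
      show i + 1 + 1 = i + 2 by omega]
    congr 1
    rw [XL_append N (a := k) (c := i - 1) (b := i + 1) (by omega) (by omega),
      show i - 1 + 1 = i by omega, XL_pair]
  rw [swapv_eq_swRH, efun_map, swRH_coe, hdec]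
  rw [List.map_append, List.map_append]
  rw [map_swapv_XL N k (i - 1) h1 h2 (fun l hl1 hl2 => by omega),
    map_swapv_XL N (i + 2) n h1 h2 (fun l hl1 hl2 => by omega)]
  have hpair : [xv N i, xv N (i + 1)].map (swapv N i (i + 1)) = [xv N (i + 1), xv N i] := by
    simp only [List.map_cons, List.map_nil]
    rw [swapv_xv N i h1 h2, swapv_xv N (i + 1) h1 h2, if_pos rfl,
      if_neg (show i + 1 ≠ i by omega), if_pos rfl]
  rw [hpair]
  rw [List.append_assoc, List.append_assoc, List.cons_append, List.cons_append,
    List.nil_append, List.cons_append, List.cons_append, List.nil_append]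
  exact efun_middle_swap (xv N (i + 1)) (xv N i) (XL N (i + 2) n) (XL N k (i - 1)) q

lemma swapv_Phi {i k n : ℕ} (hk : 1 ≤ k) (hki : k ≤ i) (hin : i + 1 ≤ n)
    (hnN : n ≤ N) (d : ℤ) :
    swapv N i (i + 1) (SJ (XL N (n + 1) N ++ scaleL (tK N) (XL N 1 (k - 1)))
        (XL N 1 (k - 1)) d)
      = SJ (XL N (n + 1) N ++ scaleL (tK N) (XL N 1 (k - 1))) (XL N 1 (k - 1)) d := by
  have h1 : 1 ≤ i := by omega
  have h2 : i + 1 ≤ N := by omega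
  rw [swapv_eq_swRH, SJ_ringHom_map, List.map_append, scaleL_map, swRH_coe]
  rw [map_swapv_XL N (n + 1) N h1 h2 (fun l hl1 hl2 => by omega),
    map_swapv_XL N 1 (k - 1) h1 h2 (fun l hl1 hl2 => by omega)]
  rw [swapv_tK N i (i + 1)]

lemma SJ_zero {K : Type*} [Field K] (P M : List K) : SJ P M ((0 : ℕ) : ℤ) = 1 := by
  rw [SJ_nat]
  simp [hfun_zero, efun_zero]

lemma SJ_tx {K : Type*} [Field K] (t x : K) (a : ℕ) :
    SJ [t * x] [x] ((a + 1 : ℕ) : ℤ) = (t - 1) * t ^ a * x ^ (a + 1) := by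
  rw [SJ_nat, Finset.sum_range_succ']
  have hz : ∀ p ∈ Finset.range (a + 1),
      hfun [t * x] (a + 1 - (p + 1)) * (-1 : K) ^ (p + 1) * efun [x] (p + 1)
        = if p = 0 then -(hfun [t * x] a * x) else 0 := by
    intro p hp
    rcases eq_or_ne p 0 with rfl | hp0
    · rw [if_pos rfl, efun_single]
      norm_num
    · rw [if_neg hp0, efun_single, if_neg (by omega), if_neg (by omega), mul_zero]
  rw [Finset.sum_congr rfl hz, Finset.sum_ite_eq' (Finset.range (a + 1)) 0
    (fun _ => -(hfun [t * x] a * x))]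
  rw [if_pos (Finset.mem_range.mpr (by omega))]
  rw [hfun_single, hfun_single, efun_single]
  simp only [Nat.sub_zero, pow_zero, mul_one, if_pos trivial]
  rw [mul_pow, mul_pow]
  ring

lemma geom_aux {K : Type*} [Field K] (t : K) (ht : t ≠ 0) :
    ∀ w : ℕ, (t - 1) * (1 + ∑ i ∈ Finset.Icc 1 w, (t⁻¹) ^ i) = t - (t⁻¹) ^ w
  | 0 => by simp
  | w + 1 => by
    rw [Finset.sum_Icc_succ_top (by omega : 1 ≤ w + 1), ← add_assoc, mul_add,
      geom_aux t ht w]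
    have hkey : t * (t⁻¹) ^ (w + 1) = (t⁻¹) ^ w := by
      rw [pow_succ, ← mul_assoc, mul_comm t, mul_assoc, mul_inv_cancel₀ ht, mul_one]
    rw [sub_mul, hkey, one_mul]
    ring

lemma pow_inv_mul_pow {K : Type*} [Field K] (t : K) (ht : t ≠ 0) {q a : ℕ} (h : q ≤ a) :
    (t⁻¹) ^ q * t ^ a = t ^ (a - q) := by
  rw [show a = (a - q) + q by omega, pow_add, ← mul_assoc, mul_comm ((t⁻¹) ^ q),
    mul_assoc, ← mul_pow, inv_mul_cancel₀ ht, one_pow, mul_one, Nat.add_sub_cancel]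

/-- The common summand for the `a ≥ 1` term comparison. -/
noncomputable def Fmatch (k n a : ℕ) (q : ℕ) : Kg N :=
  (-1 : Kg N) ^ q * efun (XL N k n) q *
    (if q ≤ a then tK N ^ (a - q) * hfun (XL N k n) (a - q) else 0)

lemma sum_match {k n : ℕ} (hk : 1 ≤ k) (hkn : k ≤ n) (hnN : n ≤ N) (a : ℕ) :
    ∑ q ∈ Finset.range (n - k + 2),
        (-1 : Kg N) ^ q * ((tK N)⁻¹) ^ q * efun (XL N k n) q
          * ((tK N) ^ a * Hz (XL N k n) ((a : ℤ) - q))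
      = SJ (scaleL (tK N) (XL N k n)) (XL N k n) (a : ℤ) := by
  have ht : tK N ≠ 0 := tK_ne_zero N
  have hL : ∑ q ∈ Finset.range (n - k + 2),
      (-1 : Kg N) ^ q * ((tK N)⁻¹) ^ q * efun (XL N k n) q
        * ((tK N) ^ a * Hz (XL N k n) ((a : ℤ) - q))
        = ∑ q ∈ Finset.range (n - k + 2), Fmatch N k n a q := by
    apply Finset.sum_congr rfl
    intro q _
    rw [Fmatch]
    rcases le_or_gt q a with hqa | hqa
    · rw [if_pos hqa]
      have hcast : (a : ℤ) - q = ((a - q : ℕ) : ℤ) := by omega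
      rw [hcast, Hz_natCast, ← pow_inv_mul_pow (tK N) ht hqa]
      ring
    · rw [if_neg (by omega), Hz_neg _ (by omega), mul_zero, mul_zero, mul_zero]
  have hR : SJ (scaleL (tK N) (XL N k n)) (XL N k n) (a : ℤ)
      = ∑ q ∈ Finset.range (a + 1), Fmatch N k n a q := by
    rw [SJ_nat]
    apply Finset.sum_congr rfl
    intro p hp
    rw [Finset.mem_range] at hp
    rw [Fmatch, if_pos (by omega), hfun_scale]
    ring
  rw [hL, hR]
  have h1 : ∑ q ∈ Finset.range (n - k + 2), Fmatch N k n a q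
      = ∑ q ∈ Finset.range (a + (n - k) + 2), Fmatch N k n a q := by
    apply Finset.sum_subset (Finset.range_subset_range.mpr (by omega))
    intro x _ hnx
    rw [Finset.mem_range, not_lt] at hnx
    rw [Fmatch, efun_eq_zero (XL N k n) x (by rw [XL_length]; omega)]
    ring
  have h2 : ∑ q ∈ Finset.range (a + 1), Fmatch N k n a q
      = ∑ q ∈ Finset.range (a + (n - k) + 2), Fmatch N k n a q := by
    apply Finset.sum_subset (Finset.range_subset_range.mpr (by omega))
    intro x _ hnx
    rw [Finset.mem_range, not_lt] at hnx
    rw [Fmatch, if_neg (by omega), mul_zero]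
  rw [h1, h2]

end EvalLayer
section FinalLayer
variable (N : ℕ)

lemma res_expand {k n : ℕ} (hk : 1 ≤ k) (hkn : k ≤ n) (hnN : n ≤ N) :
    resL [xv N k] (scaleL (tK N)⁻¹ (XL N (k + 1) n)) =
      ∑ q ∈ Finset.range (n - k + 2),
        (-1 : Kg N) ^ q * ((tK N)⁻¹) ^ q * efun (XL N k n) q *
          ((tK N / (tK N - 1)) * (xv N k) ^ (n - k + 1 - q) * (xv N k)⁻¹) := by
  have ht : tK N ≠ 0 := tK_ne_zero N
  have ht1 : tK N - 1 ≠ 0 := tK_sub_one_ne_zero N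
  have hx : xv N k ≠ 0 := xv_ne_zero N hk (by omega)
  have hres : resL [xv N k] (scaleL (tK N)⁻¹ (XL N (k + 1) n))
      = ((scaleL (tK N)⁻¹ (XL N (k + 1) n)).map (fun b => xv N k - b)).prod := by
    rw [resL]
    simp
  have hcons : scaleL (tK N)⁻¹ (XL N k n)
      = (tK N)⁻¹ * xv N k :: scaleL (tK N)⁻¹ (XL N (k + 1) n) := by
    rw [XL_cons N hkn]; rfl
  have hlen : (scaleL (tK N)⁻¹ (XL N k n)).length = n - k + 1 := by
    rw [scaleL, List.length_map, XL_length]; omega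
  have hsplit : ((scaleL (tK N)⁻¹ (XL N k n)).map (fun b => xv N k - b)).prod
      = (xv N k - (tK N)⁻¹ * xv N k)
        * ((scaleL (tK N)⁻¹ (XL N (k + 1) n)).map (fun b => xv N k - b)).prod := by
    rw [hcons, List.map_cons, List.prod_cons]
  have hfull := prod_sub_expand (xv N k) (scaleL (tK N)⁻¹ (XL N k n))
  rw [hlen, show n - k + 1 + 1 = n - k + 2 by omega] at hfull
  have hfact : xv N k - (tK N)⁻¹ * xv N k = ((tK N - 1) / tK N) * xv N k := by
    field_simp
  rw [hsplit, hfact] at hfull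
  have hfne : ((tK N - 1) / tK N) * xv N k ≠ 0 := mul_ne_zero (div_ne_zero ht1 ht) hx
  rw [hres]
  apply mul_left_cancel₀ hfne
  rw [hfull, Finset.mul_sum]
  apply Finset.sum_congr rfl
  intro q hq
  rw [efun_scale]
  field_simp

lemma xk_pow_ddUp {k n : ℕ} (hk : 1 ≤ k) (hkn : k ≤ n) (hnN : n ≤ N) (c : ℕ) :
    ddUp N k (n - 1) (xv N k ^ c) = Hz (XL N k n) ((c : ℤ) - ((n - k : ℕ) : ℤ)) := by
  have h : xv N k ^ c = Hz (XL N k k) ((c : ℕ) : ℤ) := by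
    rw [Hz_natCast, XL_single, hfun_single]
  rw [h, chainH N hk hnN (n - k) k (le_refl k) (by omega) ((c : ℕ) : ℤ)]

lemma prod_XL_ne_zero {k n : ℕ} (hk : 1 ≤ k) (hnN : n ≤ N) : (XL N k n).prod ≠ 0 := by
  apply List.prod_ne_zero
  intro h0
  rw [XL] at h0
  obtain ⟨l, hl, hxl⟩ := List.mem_map.mp h0
  rw [List.mem_range'_1] at hl
  obtain ⟨hl1, hl2⟩ := hl
  exact xv_ne_zero N (by omega) (by omega) hxl

lemma fix_tdiv : ∀ (i : ℕ), swapv N i (i + 1) (tK N / (tK N - 1)) = tK N / (tK N - 1) := by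
  intro i
  rw [swapv_div, swapv_sub, swapv_tK, swapv_one]

lemma eval_main {k n : ℕ} (hk : 1 ≤ k) (hkn : k ≤ n) (hnN : n ≤ N) (a' q : ℕ)
    (hq : q ≤ n - k + 1) :
    ddUp N k (n - 1) ((tK N / (tK N - 1)) * SJ [tK N * xv N k] [xv N k] ((a' + 1 : ℕ) : ℤ)
        * xv N k ^ (n - k + 1 - q) * (xv N k)⁻¹)
      = tK N ^ (a' + 1) * Hz (XL N k n) (((a' + 1 : ℕ) : ℤ) - (q : ℤ)) := by
  have hx : xv N k ≠ 0 := xv_ne_zero N hk (by omega)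
  have ht1 : tK N - 1 ≠ 0 := tK_sub_one_ne_zero N
  rw [SJ_tx]
  have hpow : xv N k ^ (a' + 1) * xv N k ^ (n - k + 1 - q) * (xv N k)⁻¹
      = xv N k ^ (a' + 1 + (n - k) - q) := by
    rw [← pow_add, show (a' + 1) + (n - k + 1 - q) = (a' + 1 + (n - k) - q) + 1 by omega,
      pow_succ, mul_assoc, mul_inv_cancel₀ hx, mul_one]
  have e1 : tK N / (tK N - 1) * ((tK N - 1) * tK N ^ a' * xv N k ^ (a' + 1))
      * xv N k ^ (n - k + 1 - q) * (xv N k)⁻¹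
      = tK N ^ (a' + 1) * xv N k ^ (a' + 1 + (n - k) - q) := by
    calc tK N / (tK N - 1) * ((tK N - 1) * tK N ^ a' * xv N k ^ (a' + 1))
        * xv N k ^ (n - k + 1 - q) * (xv N k)⁻¹
        = (tK N - 1) / (tK N - 1) * (tK N * tK N ^ a')
          * (xv N k ^ (a' + 1) * xv N k ^ (n - k + 1 - q) * (xv N k)⁻¹) := by ring
      _ = tK N ^ (a' + 1) * xv N k ^ (a' + 1 + (n - k) - q) := by
          rw [div_self ht1, one_mul, hpow, ← pow_succ']
  rw [e1, ddUp_scal' N k (n - 1) _ _ (fun i _ _ => by rw [swapv_pow, swapv_tK]),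
    xk_pow_ddUp N hk hkn hnN (a' + 1 + (n - k) - q)]
  have hidx : ((a' + 1 + (n - k) - q : ℕ) : ℤ) - ((n - k : ℕ) : ℤ)
      = ((a' + 1 : ℕ) : ℤ) - (q : ℤ) := by omega
  rw [hidx]

lemma eval_a0_small {k n : ℕ} (hk : 1 ≤ k) (hkn : k ≤ n) (hnN : n ≤ N) (q : ℕ)
    (hq : q ≤ n - k) :
    ddUp N k (n - 1) ((tK N / (tK N - 1)) * SJ [tK N * xv N k] [xv N k] ((0 : ℕ) : ℤ)
        * xv N k ^ (n - k + 1 - q) * (xv N k)⁻¹)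
      = if q = 0 then tK N / (tK N - 1) else 0 := by
  have hx : xv N k ≠ 0 := xv_ne_zero N hk (by omega)
  rw [SJ_zero, mul_one]
  have e1 : tK N / (tK N - 1) * xv N k ^ (n - k + 1 - q) * (xv N k)⁻¹
      = (tK N / (tK N - 1)) * xv N k ^ (n - k - q) := by
    calc tK N / (tK N - 1) * xv N k ^ (n - k + 1 - q) * (xv N k)⁻¹
        = tK N / (tK N - 1) * xv N k ^ (n - k - q) * (xv N k * (xv N k)⁻¹) := by
          rw [show n - k + 1 - q = (n - k - q) + 1 by omega, pow_succ]; ring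
      _ = tK N / (tK N - 1) * xv N k ^ (n - k - q) := by
          rw [mul_inv_cancel₀ hx, mul_one]
  rw [e1, ddUp_scal' N k (n - 1) _ _ (fun i _ _ => fix_tdiv N i),
    xk_pow_ddUp N hk hkn hnN (n - k - q)]
  rcases eq_or_ne q 0 with rfl | hq0
  · rw [if_pos rfl,
      show ((n - k - 0 : ℕ) : ℤ) - ((n - k : ℕ) : ℤ) = ((0 : ℕ) : ℤ) by omega,
      Hz_natCast, hfun_zero, mul_one]
  · rw [if_neg hq0, Hz_neg _ (by omega), mul_zero]

lemma eval_a0_top {k n : ℕ} (hk : 1 ≤ k) (hkn : k ≤ n) (hnN : n ≤ N) :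
    ddUp N k (n - 1) ((tK N / (tK N - 1)) * SJ [tK N * xv N k] [xv N k] ((0 : ℕ) : ℤ)
        * xv N k ^ (n - k + 1 - (n - k + 1)) * (xv N k)⁻¹)
      = (tK N / (tK N - 1)) * ((-1) ^ (n - k) * ((XL N k n).prod)⁻¹) := by
  rw [SJ_zero, mul_one, show n - k + 1 - (n - k + 1) = 0 by omega, pow_zero, mul_one]
  have hxk : (xv N k)⁻¹ = ((XL N k k).prod)⁻¹ := by rw [XL_single, List.prod_singleton]
  rw [hxk, ddUp_scal' N k (n - 1) _ _ (fun i _ _ => fix_tdiv N i),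
    chainInv N hk hnN (n - k) k (le_refl k) (by omega)]

end FinalLayer
/-- Lemma 1.1: `χ^{(k)}_{(1|n−k)} S_j[C+X_k^t] = c(k)·S_j[C+X_{k−1}^t] + S_j[C+X^t]`,
with `C = y_1+⋯+y_m` (variables `x_{n+1},…,x_{n+m}` of `Kg (n+m)`), `X_k^t = tX_k − X_k`,
and `c(k) = t^{−1}+⋯+t^{−(n−k)}`. -/
theorem stmt0 (n k m : ℕ) (hn : 1 ≤ n) (hk1 : 1 ≤ k) (hkn : k ≤ n) (j : ℕ) :
    chi1 (n + m) n k
        (SJ (XL (n + m) (n + 1) (n + m) ++ scaleL (tK (n + m)) (XL (n + m) 1 k))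
          (XL (n + m) 1 k) (j : ℤ))
      = (∑ i ∈ Finset.Icc 1 (n - k), (tK (n + m))⁻¹ ^ i) *
          SJ (XL (n + m) (n + 1) (n + m) ++ scaleL (tK (n + m)) (XL (n + m) 1 (k - 1)))
            (XL (n + m) 1 (k - 1)) (j : ℤ)
        + SJ (XL (n + m) (n + 1) (n + m) ++ scaleL (tK (n + m)) (XL (n + m) 1 n))
            (XL (n + m) 1 n) (j : ℤ) := by
  set N := n + m with hN
  have hnN : n ≤ N := by omega
  have ht : tK N ≠ 0 := tK_ne_zero N
  have ht1 : tK N - 1 ≠ 0 := tK_sub_one_ne_zero N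
  have hprodne : (XL N k n).prod ≠ 0 := prod_XL_ne_zero N hk1 hnN
  have hXL1k : XL N 1 k = XL N 1 (k - 1) ++ [xv N k] := XL_concat N (le_refl 1) hk1
  have hscale : scaleL (tK N) (XL N 1 k)
      = scaleL (tK N) (XL N 1 (k - 1)) ++ [tK N * xv N k] := by
    rw [hXL1k]; simp [scaleL]
  have input_split : SJ (XL N (n + 1) N ++ scaleL (tK N) (XL N 1 k)) (XL N 1 k) (j : ℤ)
      = ∑ p ∈ Finset.HasAntidiagonal.antidiagonal j,
          SJ (XL N (n + 1) N ++ scaleL (tK N) (XL N 1 (k - 1))) (XL N 1 (k - 1)) ((p.1 : ℕ) : ℤ) * SJ [tK N * xv N k] [xv N k] ((p.2 : ℕ) : ℤ) := by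
    rw [hscale, hXL1k, ← List.append_assoc]
    exact SJ_mul _ _ _ _ j
  have claim1 : resL [xv N k] (scaleL (tK N)⁻¹ (XL N (k + 1) n))
        * SJ (XL N (n + 1) N ++ scaleL (tK N) (XL N 1 k)) (XL N 1 k) (j : ℤ)
      = ∑ p ∈ Finset.HasAntidiagonal.antidiagonal j, ∑ q ∈ Finset.range (n - k + 2),
          (SJ (XL N (n + 1) N ++ scaleL (tK N) (XL N 1 (k - 1))) (XL N 1 (k - 1)) ((p.1 : ℕ) : ℤ) * ((-1) ^ q * ((tK N)⁻¹) ^ q * efun (XL N k n) q)) * (tK N / (tK N - 1) * SJ [tK N * xv N k] [xv N k] ((p.2 : ℕ) : ℤ) * xv N k ^ (n - k + 1 - q) * (xv N k)⁻¹) := by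
    rw [input_split, res_expand N hk1 hkn hnN, Finset.sum_mul_sum]
    rw [Finset.sum_comm]
    apply Finset.sum_congr rfl; intro p _
    apply Finset.sum_congr rfl; intro q _
    ring
  have hfix : ∀ (d q i : ℕ), k ≤ i → i ≤ n - 1 →
      swapv N i (i + 1) (SJ (XL N (n + 1) N ++ scaleL (tK N) (XL N 1 (k - 1))) (XL N 1 (k - 1)) ((d : ℕ) : ℤ) * ((-1) ^ q * ((tK N)⁻¹) ^ q * efun (XL N k n) q)) = (SJ (XL N (n + 1) N ++ scaleL (tK N) (XL N 1 (k - 1))) (XL N 1 (k - 1)) ((d : ℕ) : ℤ) * ((-1) ^ q * ((tK N)⁻¹) ^ q * efun (XL N k n) q)) := by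
    intro d q i hi1 hi2
    rw [swapv_mul, swapv_mul, swapv_mul, swapv_pow, swapv_neg, swapv_one,
      swapv_pow, swapv_inv, swapv_tK, swapv_Phi N hk1 hi1 (by omega) hnN,
      swapv_efun_XLkn N hk1 hi1 (by omega) hnN q]
  have per_p : ∀ (d a : ℕ), ((d, a) : ℕ × ℕ) ∈ Finset.HasAntidiagonal.antidiagonal j →
      ddUp N k (n - 1) (∑ q ∈ Finset.range (n - k + 2), (SJ (XL N (n + 1) N ++ scaleL (tK N) (XL N 1 (k - 1))) (XL N 1 (k - 1)) ((d : ℕ) : ℤ) * ((-1) ^ q * ((tK N)⁻¹) ^ q * efun (XL N k n) q)) * (tK N / (tK N - 1) * SJ [tK N * xv N k] [xv N k] ((a : ℕ) : ℤ) * xv N k ^ (n - k + 1 - q) * (xv N k)⁻¹))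
        = SJ (XL N (n + 1) N ++ scaleL (tK N) (XL N 1 (k - 1))) (XL N 1 (k - 1)) ((d : ℕ) : ℤ) * SJ (scaleL (tK N) (XL N k n)) (XL N k n) ((a : ℕ) : ℤ)
          + (if a = 0 then (∑ i ∈ Finset.Icc 1 (n - k), ((tK N)⁻¹) ^ i) * SJ (XL N (n + 1) N ++ scaleL (tK N) (XL N 1 (k - 1))) (XL N 1 (k - 1)) ((d : ℕ) : ℤ) else 0) := by
    intro d a _
    rw [ddUp_sum]
    have hpull : ∀ q ∈ Finset.range (n - k + 2),
        ddUp N k (n - 1) ((SJ (XL N (n + 1) N ++ scaleL (tK N) (XL N 1 (k - 1))) (XL N 1 (k - 1)) ((d : ℕ) : ℤ) * ((-1) ^ q * ((tK N)⁻¹) ^ q * efun (XL N k n) q)) * (tK N / (tK N - 1) * SJ [tK N * xv N k] [xv N k] ((a : ℕ) : ℤ) * xv N k ^ (n - k + 1 - q) * (xv N k)⁻¹))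
          = (SJ (XL N (n + 1) N ++ scaleL (tK N) (XL N 1 (k - 1))) (XL N 1 (k - 1)) ((d : ℕ) : ℤ) * ((-1) ^ q * ((tK N)⁻¹) ^ q * efun (XL N k n) q)) * ddUp N k (n - 1) (tK N / (tK N - 1) * SJ [tK N * xv N k] [xv N k] ((a : ℕ) : ℤ) * xv N k ^ (n - k + 1 - q) * (xv N k)⁻¹) :=
      fun q _ => ddUp_scal' N k (n - 1) _ _ (fun i h1 h2 => hfix d q i h1 h2)
    rw [Finset.sum_congr rfl hpull]
    cases a with
    | zero =>
      rw [if_pos rfl]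
      rw [Finset.sum_range_succ]
      have hsmall : ∀ q ∈ Finset.range (n - k + 1),
          (SJ (XL N (n + 1) N ++ scaleL (tK N) (XL N 1 (k - 1))) (XL N 1 (k - 1)) ((d : ℕ) : ℤ) * ((-1) ^ q * ((tK N)⁻¹) ^ q * efun (XL N k n) q)) * ddUp N k (n - 1) (tK N / (tK N - 1) * SJ [tK N * xv N k] [xv N k] ((0 : ℕ) : ℤ) * xv N k ^ (n - k + 1 - q) * (xv N k)⁻¹)
            = if q = 0 then SJ (XL N (n + 1) N ++ scaleL (tK N) (XL N 1 (k - 1))) (XL N 1 (k - 1)) ((d : ℕ) : ℤ) * (tK N / (tK N - 1)) else 0 := by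
        intro q hq
        rw [Finset.mem_range] at hq
        rw [eval_a0_small N hk1 hkn hnN q (by omega)]
        rcases eq_or_ne q 0 with rfl | hq0
        · rw [if_pos rfl, if_pos rfl, efun_zero]
          ring
        · rw [if_neg hq0, if_neg hq0, mul_zero]
      rw [Finset.sum_congr rfl hsmall,
        Finset.sum_ite_eq' (Finset.range (n - k + 1)) 0
          (fun _ => SJ (XL N (n + 1) N ++ scaleL (tK N) (XL N 1 (k - 1))) (XL N 1 (k - 1)) ((d : ℕ) : ℤ) * (tK N / (tK N - 1))),
        if_pos (Finset.mem_range.mpr (by omega)),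
        eval_a0_top N hk1 hkn hnN]
      have hEP : efun (XL N k n) (n - k + 1) = (XL N k n).prod := by
        rw [show n - k + 1 = (XL N k n).length by rw [XL_length]; omega,
          efun_length_eq_prod]
      rw [hEP]
      have hsign : ((-1 : Kg N)) ^ (n - k + 1) * (-1) ^ (n - k) = -1 := by
        calc (-1 : Kg N) ^ (n - k + 1) * (-1) ^ (n - k)
            = ((-1 : Kg N) * -1) ^ (n - k) * -1 := by rw [mul_pow, pow_succ]; ring
          _ = -1 := by norm_num
      have htt : ((tK N)⁻¹) ^ (n - k + 1) * tK N = ((tK N)⁻¹) ^ (n - k) := by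
        rw [pow_succ, mul_assoc, inv_mul_cancel₀ ht, mul_one]
      have hP : (XL N k n).prod * ((XL N k n).prod)⁻¹ = 1 := mul_inv_cancel₀ hprodne
      have hg := geom_aux (tK N) ht (n - k)
      have key : (SJ (XL N (n + 1) N ++ scaleL (tK N) (XL N 1 (k - 1))) (XL N 1 (k - 1)) ((d : ℕ) : ℤ) * ((-1) ^ (n - k + 1) * ((tK N)⁻¹) ^ (n - k + 1) * (XL N k n).prod))
            * (tK N / (tK N - 1) * ((-1) ^ (n - k) * ((XL N k n).prod)⁻¹))
          = -(SJ (XL N (n + 1) N ++ scaleL (tK N) (XL N 1 (k - 1))) (XL N 1 (k - 1)) ((d : ℕ) : ℤ) * (((tK N)⁻¹) ^ (n - k) * (tK N - 1)⁻¹)) := by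
        calc (SJ (XL N (n + 1) N ++ scaleL (tK N) (XL N 1 (k - 1))) (XL N 1 (k - 1)) ((d : ℕ) : ℤ) * ((-1) ^ (n - k + 1) * ((tK N)⁻¹) ^ (n - k + 1) * (XL N k n).prod))
              * (tK N / (tK N - 1) * ((-1) ^ (n - k) * ((XL N k n).prod)⁻¹))
            = ((-1 : Kg N) ^ (n - k + 1) * (-1) ^ (n - k))
                * (((tK N)⁻¹) ^ (n - k + 1) * tK N)
                * ((XL N k n).prod * ((XL N k n).prod)⁻¹)
                * (SJ (XL N (n + 1) N ++ scaleL (tK N) (XL N 1 (k - 1))) (XL N 1 (k - 1)) ((d : ℕ) : ℤ) * (tK N - 1)⁻¹) := by ring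
          _ = -(SJ (XL N (n + 1) N ++ scaleL (tK N) (XL N 1 (k - 1))) (XL N 1 (k - 1)) ((d : ℕ) : ℤ) * (((tK N)⁻¹) ^ (n - k) * (tK N - 1)⁻¹)) := by
              rw [hsign, htt, hP]; ring
      rw [key]
      calc SJ (XL N (n + 1) N ++ scaleL (tK N) (XL N 1 (k - 1))) (XL N 1 (k - 1)) ((d : ℕ) : ℤ) * (tK N / (tK N - 1))
            + -(SJ (XL N (n + 1) N ++ scaleL (tK N) (XL N 1 (k - 1))) (XL N 1 (k - 1)) ((d : ℕ) : ℤ) * (((tK N)⁻¹) ^ (n - k) * (tK N - 1)⁻¹))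
          = SJ (XL N (n + 1) N ++ scaleL (tK N) (XL N 1 (k - 1))) (XL N 1 (k - 1)) ((d : ℕ) : ℤ) * ((tK N - ((tK N)⁻¹) ^ (n - k)) * (tK N - 1)⁻¹) := by ring
        _ = SJ (XL N (n + 1) N ++ scaleL (tK N) (XL N 1 (k - 1))) (XL N 1 (k - 1)) ((d : ℕ) : ℤ) * (((tK N - 1) * (1 + (∑ i ∈ Finset.Icc 1 (n - k), ((tK N)⁻¹) ^ i))) * (tK N - 1)⁻¹) := by rw [hg]
        _ = SJ (XL N (n + 1) N ++ scaleL (tK N) (XL N 1 (k - 1))) (XL N 1 (k - 1)) ((d : ℕ) : ℤ) * (1 + (∑ i ∈ Finset.Icc 1 (n - k), ((tK N)⁻¹) ^ i)) := by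
            rw [mul_comm (tK N - 1) (1 + (∑ i ∈ Finset.Icc 1 (n - k), ((tK N)⁻¹) ^ i)), mul_assoc, mul_inv_cancel₀ ht1, mul_one]
        _ = SJ (XL N (n + 1) N ++ scaleL (tK N) (XL N 1 (k - 1))) (XL N 1 (k - 1)) ((d : ℕ) : ℤ) * SJ (scaleL (tK N) (XL N k n)) (XL N k n) ((0 : ℕ) : ℤ) + (∑ i ∈ Finset.Icc 1 (n - k), ((tK N)⁻¹) ^ i) * SJ (XL N (n + 1) N ++ scaleL (tK N) (XL N 1 (k - 1))) (XL N 1 (k - 1)) ((d : ℕ) : ℤ) := by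
            rw [SJ_zero]; ring
    | succ a' =>
      rw [if_neg (Nat.succ_ne_zero a'), add_zero]
      have hstep : ∀ q ∈ Finset.range (n - k + 2),
          (SJ (XL N (n + 1) N ++ scaleL (tK N) (XL N 1 (k - 1))) (XL N 1 (k - 1)) ((d : ℕ) : ℤ) * ((-1) ^ q * ((tK N)⁻¹) ^ q * efun (XL N k n) q)) * ddUp N k (n - 1) (tK N / (tK N - 1) * SJ [tK N * xv N k] [xv N k] ((a' + 1 : ℕ) : ℤ) * xv N k ^ (n - k + 1 - q) * (xv N k)⁻¹)
            = SJ (XL N (n + 1) N ++ scaleL (tK N) (XL N 1 (k - 1))) (XL N 1 (k - 1)) ((d : ℕ) : ℤ) * ((-1) ^ q * ((tK N)⁻¹) ^ q * efun (XL N k n) q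
                * (tK N ^ (a' + 1) * Hz (XL N k n) (((a' + 1 : ℕ) : ℤ) - (q : ℤ)))) := by
        intro q hq
        rw [Finset.mem_range] at hq
        rw [eval_main N hk1 hkn hnN a' q (by omega)]
        ring
      rw [Finset.sum_congr rfl hstep, ← Finset.mul_sum, sum_match N hk1 hkn hnN (a' + 1)]
  -- assemble
  have hmem : ((j, 0) : ℕ × ℕ) ∈ Finset.HasAntidiagonal.antidiagonal j := by simp
  have RHS2 : SJ (XL N (n + 1) N ++ scaleL (tK N) (XL N 1 n)) (XL N 1 n) (j : ℤ)
      = ∑ p ∈ Finset.HasAntidiagonal.antidiagonal j, SJ (XL N (n + 1) N ++ scaleL (tK N) (XL N 1 (k - 1))) (XL N 1 (k - 1)) ((p.1 : ℕ) : ℤ) * SJ (scaleL (tK N) (XL N k n)) (XL N k n) ((p.2 : ℕ) : ℤ) := by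
    have hXL1n : XL N 1 n = XL N 1 (k - 1) ++ XL N k n := by
      have h := XL_append N (a := 1) (c := k - 1) (b := n) (by omega) (by omega)
      rw [show k - 1 + 1 = k by omega] at h
      exact h
    have hsc : scaleL (tK N) (XL N 1 n)
        = scaleL (tK N) (XL N 1 (k - 1)) ++ scaleL (tK N) (XL N k n) := by
      rw [hXL1n]; simp [scaleL]
    rw [hsc, hXL1n, ← List.append_assoc]
    exact SJ_mul _ _ _ _ j
  simp only [chi1]
  rw [claim1, ddUp_sum]
  have sumEq : ∑ p ∈ Finset.HasAntidiagonal.antidiagonal j,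
      ddUp N k (n - 1) (∑ q ∈ Finset.range (n - k + 2), (SJ (XL N (n + 1) N ++ scaleL (tK N) (XL N 1 (k - 1))) (XL N 1 (k - 1)) ((p.1 : ℕ) : ℤ) * ((-1) ^ q * ((tK N)⁻¹) ^ q * efun (XL N k n) q)) * (tK N / (tK N - 1) * SJ [tK N * xv N k] [xv N k] ((p.2 : ℕ) : ℤ) * xv N k ^ (n - k + 1 - q) * (xv N k)⁻¹))
      = ∑ p ∈ Finset.HasAntidiagonal.antidiagonal j,
          (SJ (XL N (n + 1) N ++ scaleL (tK N) (XL N 1 (k - 1))) (XL N 1 (k - 1)) ((p.1 : ℕ) : ℤ) * SJ (scaleL (tK N) (XL N k n)) (XL N k n) ((p.2 : ℕ) : ℤ)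
            + (if p.2 = 0 then (∑ i ∈ Finset.Icc 1 (n - k), ((tK N)⁻¹) ^ i) * SJ (XL N (n + 1) N ++ scaleL (tK N) (XL N 1 (k - 1))) (XL N 1 (k - 1)) ((p.1 : ℕ) : ℤ) else 0)) :=
    Finset.sum_congr rfl (fun p hp => by
      obtain ⟨d, a⟩ := p
      exact per_p d a hp)
  rw [sumEq, Finset.sum_add_distrib]
  have hite : ∑ p ∈ Finset.HasAntidiagonal.antidiagonal j,
      (if p.2 = 0 then (∑ i ∈ Finset.Icc 1 (n - k), ((tK N)⁻¹) ^ i) * SJ (XL N (n + 1) N ++ scaleL (tK N) (XL N 1 (k - 1))) (XL N 1 (k - 1)) ((p.1 : ℕ) : ℤ) else 0) = (∑ i ∈ Finset.Icc 1 (n - k), ((tK N)⁻¹) ^ i) * SJ (XL N (n + 1) N ++ scaleL (tK N) (XL N 1 (k - 1))) (XL N 1 (k - 1)) ((j : ℕ) : ℤ) := by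
    rw [Finset.sum_eq_single_of_mem (j, 0) hmem]
    · rw [if_pos rfl]
    · intro b hb hne
      rw [Finset.HasAntidiagonal.mem_antidiagonal] at hb
      rcases eq_or_ne b.2 0 with h2 | h2
      · exfalso
        apply hne
        have h1 : b.1 = j := by omega
        rw [← h1, ← h2]
      · exact if_neg h2
  rw [hite, RHS2]
  exact add_comm _ _

end
end

section
/- Let λ be a partition with at most n parts, set α_i = λ_i − i + 1, and let Y = y_1+⋯+y_m be an auxiliary alphabet of independent variables. Then S_λ[Y+X]·Δ(X) = det( S_{α_i+n−1}[Y + x_{n+1−j}] )_{1≤i,j≤n}, where Δ(X) = ∏_{1≤i<j≤n}(x_j − x_i) is the Vandermonde determinant. -/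
open MvPolynomial Finset

set_option synthInstance.maxHeartbeats 1000000
set_option maxHeartbeats 1000000

noncomputable section

/-!
With `H_A = Σ_j S_j[A] zʲ` and `E_A = ∏_{a ∈ A} (1 - a z)` one has `H_A · E_A = 1`, hence
`H_{Y+x_k} = H_{Y+X} · E_{X∖x_k}`. Comparing coefficients, the `k`-th column of the matrix on the
right is the Jacobi–Trudi matrix of `S_λ[Y+X]` times the coefficient vector of
`∏_{c ∈ X∖x_k} (z - c)`. Left multiplication of this coefficient matrix by the Vandermonde matrix
of `X` evaluates these polynomials at the `x_j`, which gives a diagonal matrix; so its determinant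
is `Δ(X)`.
-/

section Alphabet

variable {A : Type*} [CommRing A]

def hSeries (L : List A) : PowerSeries A := PowerSeries.mk (hfun L)

def prodOneSub (s : Multiset A) : Polynomial A :=
  (s.map fun a => 1 - Polynomial.C a * Polynomial.X).prod

lemma hSeries_nil : hSeries ([] : List A) = 1 := by
  ext (_ | j) <;> simp [hSeries, hfun, PowerSeries.coeff_one]

lemma hSeries_cons_mul (a : A) (l : List A) :
    hSeries (a :: l) * (1 - PowerSeries.C a * PowerSeries.X) = hSeries l := by
  rw [mul_sub, mul_one, mul_left_comm, ← mul_assoc]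
  ext (_ | j)
  · simp [hSeries, hfun]
  · simp [hSeries, hfun, PowerSeries.coeff_succ_mul_X]

lemma hSeries_mul_prodOneSub (L : List A) :
    hSeries L * (prodOneSub (L : Multiset A) : PowerSeries A) = 1 := by
  induction L with
  | nil => simp [hSeries_nil, prodOneSub]
  | cons a l ih =>
    rw [← Multiset.cons_coe, prodOneSub, Multiset.map_cons, Multiset.prod_cons, ← prodOneSub,
      Polynomial.coe_mul, ← mul_assoc]
    simpa [hSeries_cons_mul] using ih

lemma hSeries_eq_mul_prodOneSub {L L' : List A} {s : Multiset A}
    (h : (L : Multiset A) = L' + s) :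
    hSeries L' = hSeries L * (prodOneSub s : PowerSeries A) := by
  refine left_inv_eq_right_inv (hSeries_mul_prodOneSub L') ?_
  rw [mul_left_comm, ← Polynomial.coe_mul, prodOneSub, prodOneSub,
    ← Multiset.prod_add, ← Multiset.map_add, ← h, ← prodOneSub, hSeries_mul_prodOneSub]

lemma natDegree_prodOneSub_le (s : Multiset A) : (prodOneSub s).natDegree ≤ Multiset.card s := by
  induction s using Multiset.induction_on with
  | empty => simp [prodOneSub]
  | cons a s ih =>
    rw [prodOneSub, Multiset.map_cons, Multiset.prod_cons, ← prodOneSub, Multiset.card_cons,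
      add_comm]
    refine (Polynomial.natDegree_mul_le).trans (add_le_add ?_ ih)
    compute_degree

lemma reflect_prodOneSub (s : Multiset A) :
    Polynomial.reflect (Multiset.card s) (prodOneSub s)
      = (s.map fun a => Polynomial.X - Polynomial.C a).prod := by
  induction s using Multiset.induction_on with
  | empty => simp [prodOneSub]
  | cons a s ih =>
    rw [prodOneSub, Multiset.map_cons, Multiset.prod_cons, ← prodOneSub, Multiset.card_cons,
      add_comm, Polynomial.reflect_mul _ _ (by compute_degree) (natDegree_prodOneSub_le s), ih,
      Multiset.map_cons, Multiset.prod_cons]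
    congr 1
    rw [Polynomial.reflect_sub, Polynomial.reflect_one, ← pow_one Polynomial.X,
      Polynomial.reflect_C_mul_X_pow]
    simp

lemma coeff_prod_X_sub_C_eq_coeff_prodOneSub (s : Multiset A) {k : ℕ}
    (hk : k ≤ Multiset.card s) :
    ((s.map fun a => Polynomial.X - Polynomial.C a).prod).coeff k
      = (prodOneSub s).coeff (Multiset.card s - k) := by
  rw [← reflect_prodOneSub, Polynomial.coeff_reflect, Polynomial.revAt_le hk]

def intCoeff (f : PowerSeries A) (z : ℤ) : A :=
  if 0 ≤ z then PowerSeries.coeff z.toNat f else 0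

lemma intCoeff_of_neg (f : PowerSeries A) {z : ℤ} (hz : z < 0) : intCoeff f z = 0 := by
  simp [intCoeff, hz.not_ge]

lemma SJ_nil_eq_intCoeff (P : List A) (z : ℤ) : SJ P [] z = intCoeff (hSeries P) z := by
  simp [SJ, intCoeff, hSeries, Finset.sum_range_succ', efun]

lemma intCoeff_mul_coe (f : PowerSeries A) {G : Polynomial A} {d : ℕ}
    (hG : G.natDegree ≤ d) (z : ℤ) :
    intCoeff (f * (G : PowerSeries A)) z
      = ∑ p ∈ Finset.range (d + 1), intCoeff f (z - p) * G.coeff p := by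
  rcases lt_or_ge z 0 with hz | hz
  · rw [intCoeff_of_neg _ hz]
    exact (Finset.sum_eq_zero fun p _ => by rw [intCoeff_of_neg _ (by omega), zero_mul]).symm
  lift z to ℕ using hz
  calc intCoeff (f * (G : PowerSeries A)) z
      = ∑ p ∈ Finset.range (z + 1), intCoeff f (z - p) * G.coeff p := by
        rw [intCoeff, if_pos (by omega), Int.toNat_natCast, PowerSeries.coeff_mul,
          ← Finset.Nat.sum_antidiagonal_swap]
        simp only [Prod.fst_swap, Prod.snd_swap, Polynomial.coeff_coe]
        rw [Finset.Nat.sum_antidiagonal_eq_sum_range_succ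
          (fun i j => PowerSeries.coeff j f * G.coeff i)]
        refine Finset.sum_congr rfl fun p hp => ?_
        have hp : p ≤ z := Nat.lt_succ_iff.1 (Finset.mem_range.1 hp)
        rw [intCoeff, if_pos (by omega), show ((z : ℤ) - p).toNat = z - p by omega]
    _ = ∑ p ∈ Finset.range (z + d + 1), intCoeff f (z - p) * G.coeff p := by
        refine Finset.sum_subset (Finset.range_subset_range.2 (by omega)) fun p _ hp => ?_
        rw [intCoeff_of_neg _ (by have := Finset.mem_range.not.1 hp; omega), zero_mul]
    _ = ∑ p ∈ Finset.range (d + 1), intCoeff f (z - p) * G.coeff p := by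
        refine (Finset.sum_subset (Finset.range_subset_range.2 (by omega)) fun p _ hp => ?_).symm
        rw [Polynomial.coeff_eq_zero_of_natDegree_lt (by have := Finset.mem_range.not.1 hp; omega),
          mul_zero]

lemma SJ_nil_eq_sum_SJ_mul_coeff {P L : List A} {s : Multiset A}
    (h : (P : Multiset A) = L + s) (z : ℤ) :
    SJ L [] (z + Multiset.card s)
      = ∑ k ∈ Finset.range (Multiset.card s + 1),
          SJ P [] (z + k) * ((s.map fun a => Polynomial.X - Polynomial.C a).prod).coeff k := by
  rw [SJ_nil_eq_intCoeff, hSeries_eq_mul_prodOneSub h,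
    intCoeff_mul_coe _ (natDegree_prodOneSub_le s), ← Finset.sum_range_reflect]
  refine Finset.sum_congr rfl fun k hk => ?_
  replace hk : k ≤ Multiset.card s := Nat.lt_succ_iff.1 (Finset.mem_range.1 hk)
  rw [SJ_nil_eq_intCoeff, coeff_prod_X_sub_C_eq_coeff_prodOneSub s hk, Nat.add_sub_cancel]
  congr 2
  push_cast [Nat.sub_sub_self hk, hk]
  ring

end Alphabet

lemma Finset.prod_prod_erase_eq_prod_prod_Ioi_mul {ι M : Type*} [Fintype ι] [LinearOrder ι]
    [LocallyFiniteOrderTop ι] [LocallyFiniteOrderBot ι] [CommMonoid M] (f : ι → ι → M) :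
    ∏ i, ∏ j ∈ Finset.univ.erase i, f i j
      = (∏ i, ∏ j ∈ Finset.Ioi i, f j i) * ∏ i, ∏ j ∈ Finset.Ioi i, f i j := by
  have hsplit : ∀ i, ∏ j ∈ Finset.univ.erase i, f i j
      = (∏ j ∈ Finset.Iio i, f i j) * ∏ j ∈ Finset.Ioi i, f i j := by
    intro i
    rw [← Finset.prod_filter_mul_prod_filter_not _ (· < i)]
    congr 2 <;> ext j <;>
      simp only [Finset.mem_filter, Finset.mem_erase, Finset.mem_univ, Finset.mem_Iio,
        Finset.mem_Ioi, and_true, not_lt] <;> grind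
  rw [Finset.prod_congr rfl fun i _ => hsplit i, Finset.prod_mul_distrib]
  congr 1
  exact Finset.prod_comm' fun i j => by simp

lemma Finset.prod_Icc_Ioc_eq_prod_Ioi_rev {M : Type*} [CommMonoid M] (n : ℕ) (f : ℕ → ℕ → M) :
    ∏ i ∈ Finset.Icc 1 n, ∏ j ∈ Finset.Ioc i n, f i j
      = ∏ a : Fin n, ∏ b ∈ Finset.Ioi a, f (n - b) (n - a) := by
  rw [Finset.prod_sigma', Finset.prod_sigma']
  refine Finset.prod_bij' (fun p hp => ⟨⟨n - p.2, ?_⟩, ⟨n - p.1, ?_⟩⟩)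
    (fun q _ => ⟨n - q.2, n - q.1⟩) ?_ ?_ ?_ ?_ ?_ <;>
  simp only [Finset.mem_sigma, Finset.mem_Icc, Finset.mem_Ioc, Finset.mem_univ, Finset.mem_Ioi,
    true_and, Sigma.forall, Fin.lt_def, Sigma.mk.injEq, Fin.ext_iff, heq_eq_eq] at * <;>
  grind

section Vandermonde

variable {A : Type*} {n : ℕ}

def alphabetErase (v : Fin n → A) (b : Fin n) : Multiset A :=
  (Finset.univ.erase b).val.map v

lemma univ_val_map_eq_cons_alphabetErase (v : Fin n → A) (b : Fin n) :
    Finset.univ.val.map v = v b ::ₘ alphabetErase v b := by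
  rw [alphabetErase, Finset.erase_val, ← Multiset.map_cons,
    Multiset.cons_erase (Finset.mem_univ_val b)]

lemma card_alphabetErase (v : Fin n → A) (b : Fin n) :
    Multiset.card (alphabetErase v b) = n - 1 := by
  simp [alphabetErase]

def eraseCoeffMatrix [CommRing A] (v : Fin n → A) : Matrix (Fin n) (Fin n) A :=
  Matrix.of fun k b =>
    ((alphabetErase v b).map fun a => Polynomial.X - Polynomial.C a).prod.coeff k

lemma vandermonde_mul_eraseCoeffMatrix [CommRing A] [Nontrivial A] (v : Fin n → A) :
    Matrix.vandermonde v * eraseCoeffMatrix v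
      = Matrix.diagonal fun b => ∏ c ∈ Finset.univ.erase b, (v b - v c) := by
  have hentry : ∀ a b, (Matrix.vandermonde v * eraseCoeffMatrix v) a b
      = ∏ c ∈ Finset.univ.erase b, (v a - v c) := by
    intro a b
    have hdeg : ((alphabetErase v b).map fun a => Polynomial.X - Polynomial.C a).prod.natDegree
        < n := by
      rw [Polynomial.natDegree_multiset_prod_X_sub_C_eq_card, card_alphabetErase]
      exact Nat.sub_lt (Fin.pos b) one_pos
    simp only [Matrix.mul_apply, Matrix.vandermonde_apply, eraseCoeffMatrix, Matrix.of_apply]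
    rw [Fin.sum_univ_eq_sum_range (fun k => v a ^ k * Polynomial.coeff _ k) n,
      Finset.sum_congr rfl fun k _ => mul_comm _ _, ← Polynomial.eval_eq_sum_range' hdeg,
      Polynomial.eval_multiset_prod, alphabetErase, Multiset.map_map, Multiset.map_map]
    simp [Finset.prod_eq_multiset_prod]
  ext a b
  rcases eq_or_ne a b with rfl | hab
  · rw [hentry, Matrix.diagonal_apply_eq]
  · rw [hentry, Matrix.diagonal_apply_ne _ hab]
    exact Finset.prod_eq_zero (Finset.mem_erase.2 ⟨hab, Finset.mem_univ a⟩) (sub_self _)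

lemma det_eraseCoeffMatrix [CommRing A] [IsDomain A] {v : Fin n → A} (hv : Function.Injective v) :
    (eraseCoeffMatrix v).det = ∏ i, ∏ j ∈ Finset.Ioi i, (v i - v j) := by
  have h := congrArg Matrix.det (vandermonde_mul_eraseCoeffMatrix v)
  rw [Matrix.det_mul, Matrix.det_diagonal, Finset.prod_prod_erase_eq_prod_prod_Ioi_mul,
    ← Matrix.det_vandermonde] at h
  exact mul_left_cancel₀ (Matrix.det_vandermonde_ne_zero_iff.2 hv) h

lemma matrix_SJ_append_singleton_eq_mul_eraseCoeffMatrix [CommRing A] {Y X : List A}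
    {v : Fin n → A} (hX : (X : Multiset A) = Finset.univ.val.map v) (r : Fin n → ℤ) :
    (Matrix.of fun i j => SJ (Y ++ [v j]) [] (r i + n - 1))
      = (Matrix.of fun i k : Fin n => SJ (Y ++ X) [] (r i + (k : ℕ))) * eraseCoeffMatrix v := by
  ext i b
  have hsplit : ((Y ++ X : List A) : Multiset A) = ↑(Y ++ [v b]) + alphabetErase v b := by
    rw [← Multiset.coe_add, ← Multiset.coe_add, hX, univ_val_map_eq_cons_alphabetErase v b,
      Multiset.coe_singleton, ← Multiset.singleton_add, add_assoc]
  have hcol := SJ_nil_eq_sum_SJ_mul_coeff hsplit (r i)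
  rw [card_alphabetErase, Nat.sub_add_cancel (Fin.pos b)] at hcol
  simp only [Matrix.of_apply, Matrix.mul_apply, eraseCoeffMatrix]
  rw [Fin.sum_univ_eq_sum_range (fun k : ℕ => SJ (Y ++ X) [] (r i + k) * Polynomial.coeff _ k) n,
    ← hcol]
  have := Fin.pos b
  congr 1
  omega

end Vandermonde

lemma xv_injOn (N : ℕ) : Set.InjOn (xv N) (Set.Icc 1 N) := by
  rintro i ⟨hi1, hiN⟩ j ⟨hj1, hjN⟩ h
  rw [xv, xv, dif_pos (⟨hi1, hiN⟩ : 1 ≤ i ∧ i ≤ N), dif_pos (⟨hj1, hjN⟩ : 1 ≤ j ∧ j ≤ N)] at h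
  have := Fin.mk.inj_iff.1 (MvPolynomial.X_injective (IsFractionRing.injective _ _ h))
  omega

lemma coe_XL_one (N n : ℕ) :
    (XL N 1 n : Multiset (Kg N)) = Finset.univ.val.map fun a : Fin n => xv N (n - a) := by
  rw [Fin.univ_val_map, ← Multiset.coe_reverse, XL, Nat.add_sub_cancel]
  congr 1
  refine List.ext_getElem (by simp) fun i hi _ => ?_
  simp only [List.getElem_reverse, List.getElem_map, List.getElem_range', List.getElem_ofFn,
    List.length_reverse, List.length_map, List.length_range'] at hi ⊢
  congr 1
  omega

theorem stmt5_general (n m : ℕ) (lam : Fin n → ℕ) :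
    schurJT n lam (XL (n + m) (n + 1) (n + m) ++ XL (n + m) 1 n) [] *
        (∏ i ∈ Finset.Icc 1 n, ∏ j ∈ Finset.Ioc i n, (xv (n + m) j - xv (n + m) i))
      = (Matrix.of fun i j : Fin n =>
          SJ (XL (n + m) (n + 1) (n + m) ++ [xv (n + m) (n - (j : ℕ))]) []
            ((lam i : ℤ) - (i : ℕ) + (n : ℤ) - 1)).det := by
  have hv : Function.Injective fun a : Fin n => xv (n + m) (n - a) := fun a b h => by
    have := xv_injOn (n + m) ⟨by omega, by omega⟩ ⟨by omega, by omega⟩ h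
    omega
  rw [matrix_SJ_append_singleton_eq_mul_eraseCoeffMatrix (coe_XL_one (n + m) n), Matrix.det_mul,
    det_eraseCoeffMatrix hv, Finset.prod_Icc_Ioc_eq_prod_Ioi_rev]
  rfl

/-- formula A.13: `S_λ[Y+X]·Δ(X) = det(S_{α_i+n−1}[Y+x_{n+1−j}])`. -/
theorem stmt5 (n m : ℕ) (lam : Fin n → ℕ) (hlam : Antitone lam) :
    schurJT n lam (XL (n + m) (n + 1) (n + m) ++ XL (n + m) 1 n) [] *
        (∏ i ∈ Finset.Icc 1 n, ∏ j ∈ Finset.Ioc i n, (xv (n + m) j - xv (n + m) i))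
      = (Matrix.of fun i j : Fin n =>
          SJ (XL (n + m) (n + 1) (n + m) ++ [xv (n + m) (n - (j : ℕ))]) []
            ((lam i : ℤ) - (i : ℕ) + (n : ℤ) - 1)).det :=
  stmt5_general n m lam

end
end
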